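/- arXiv:2206.03172 — 3 statements merged into one kernel-verified Lean document; each statement's English description precedes it below -/
import Mathlib

section
/- Let T1 = (Ty1, ≤1), T2 = (Ty2, ≤2) and T3 = (Ty3, ≤3) be pairwise compatible type systems. Then T1 ∪ T2 is compatible with T3; that is, (≤1 ∪ ≤2) ∪ ≤3 is a partial order on Ty1 ∪ Ty2 ∪ Ty3, so ((Ty1 ∪ Ty2) ∪ Ty3, (≤1 ∪ ≤2) ∪ ≤3) is a type system. -/
namespace RST

/-! ## Type systems -/

/-- A relation (given as a set of pairs) is a partial order on the set `Ty`. -/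
def IsPartialOrderOn {U : Type*} (Ty : Set U) (le : Set (U × U)) : Prop :=
  (∀ p ∈ le, p.1 ∈ Ty ∧ p.2 ∈ Ty) ∧
  (∀ τ ∈ Ty, (τ, τ) ∈ le) ∧
  (∀ a b : U, (a, b) ∈ le → (b, a) ∈ le → a = b) ∧
  (∀ a b c : U, (a, b) ∈ le → (b, c) ∈ le → (a, c) ∈ le)

/-- The subtype closure of `Ty'` in the type system `(Ty, le)`. -/
def subtypeClosure {U : Type*} (Ty : Set U) (le : Set (U × U)) (Ty' : Set U) : Set U :=
  {τ | τ ∈ Ty ∧ ∃ τ' ∈ Ty', (τ, τ') ∈ le}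

/-- The set of all subtype closures of subsets of `Ty`. -/
def SC {U : Type*} (Ty : Set U) (le : Set (U × U)) : Set (Set U) :=
  {S | ∃ Ty' ⊆ Ty, S = subtypeClosure Ty le Ty'}

/-- The candidate order of an upper bound extension: the reflexive closure (on `Ty ∪ Tystar`)
of `le` together with the pairs `(τ, f S)` for `τ ∈ S ∈ SC Ty le`. -/
def upperBoundRel {U : Type*} (Ty Tystar : Set U) (le : Set (U × U)) (f : Set U → U) :
    Set (U × U) :=
  (le ∪ {p : U × U | ∃ S ∈ SC Ty le, p.1 ∈ S ∧ p.2 = f S}) ∪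
    {p : U × U | p.1 = p.2 ∧ p.1 ∈ Ty ∪ Tystar}

/-! ## Graphs -/

/-- A (raw) directed labelled bipartite graph: tokens `Tk`, configurators `Cf`, arrows `Arr`,
incidence, arrow indices and vertex labels all given relationally (as sets of pairs), so that
unions of graphs are componentwise unions. -/
structure PreGraph (V A L : Type*) where
  Tk : Set V
  Cf : Set V
  Arr : Set A
  inc : Set (A × (V × V))
  ia : Set (A × ℕ)
  tl : Set (V × L)
  cl : Set (V × L)

variable {V A L : Type*}

instance : Union (PreGraph V A L) :=
  ⟨fun g h =>
    ⟨g.Tk ∪ h.Tk, g.Cf ∪ h.Cf, g.Arr ∪ h.Arr, g.inc ∪ h.inc, g.ia ∪ h.ia,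
      g.tl ∪ h.tl, g.cl ∪ h.cl⟩⟩

def PreGraph.Subgraph (h g : PreGraph V A L) : Prop :=
  h.Tk ⊆ g.Tk ∧ h.Cf ⊆ g.Cf ∧ h.Arr ⊆ g.Arr ∧ h.inc ⊆ g.inc ∧ h.ia ⊆ g.ia ∧
    h.tl ⊆ g.tl ∧ h.cl ⊆ g.cl

/-- The vertices adjacent to `u` (together with `u`). -/
def PreGraph.adjTo (g : PreGraph V A L) (u : V) : Set V :=
  {u} ∪ {v | ∃ a ∈ g.Arr, (a, (v, u)) ∈ g.inc ∨ (a, (u, v)) ∈ g.inc}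

/-- The arrows incident to `u`. -/
def PreGraph.incidentArrows (g : PreGraph V A L) (u : V) : Set A :=
  {a | a ∈ g.Arr ∧ ∃ v, (a, (v, u)) ∈ g.inc ∨ (a, (u, v)) ∈ g.inc}

/-- The restriction of a graph to given vertex and arrow sets. -/
def PreGraph.restrict (g : PreGraph V A L) (Vs : Set V) (As : Set A) : PreGraph V A L :=
  ⟨g.Tk ∩ Vs, g.Cf ∩ Vs, g.Arr ∩ As, {q | q ∈ g.inc ∧ q.1 ∈ As},
    {q | q ∈ g.ia ∧ q.1 ∈ As}, {q | q ∈ g.tl ∧ q.1 ∈ Vs}, {q | q ∈ g.cl ∧ q.1 ∈ Vs}⟩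

/-- The neighbourhood of a vertex `u`. -/
def PreGraph.Nh (g : PreGraph V A L) (u : V) : PreGraph V A L :=
  g.restrict (g.adjTo u) (g.incidentArrows u)

/-- A set of pairs is (the graph of) a function with domain `D`. -/
def IsFunctionOn {α β : Type*} (R : Set (α × β)) (D : Set α) : Prop :=
  (∀ p ∈ R, p.1 ∈ D) ∧ ∀ x ∈ D, ∃! y, (x, y) ∈ R

/-- A raw graph is a genuine directed labelled bipartite graph. -/
def IsGraph (g : PreGraph V A L) : Prop :=
  Disjoint g.Tk g.Cf ∧
  IsFunctionOn g.inc g.Arr ∧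
  (∀ a v w, (a, (v, w)) ∈ g.inc → (v ∈ g.Tk ∧ w ∈ g.Cf) ∨ (v ∈ g.Cf ∧ w ∈ g.Tk)) ∧
  IsFunctionOn g.ia g.Arr ∧ IsFunctionOn g.tl g.Tk ∧ IsFunctionOn g.cl g.Cf

/-- `ars` is the list of incoming arrows of `u`, listed in increasing index order
(the arrow at position `i` carries index `i+1`). -/
def InArrowSeq (g : PreGraph V A L) (u : V) (ars : List A) : Prop :=
  ars.Nodup ∧ (∀ a : A, a ∈ ars ↔ a ∈ g.Arr ∧ ∃ w, (a, (w, u)) ∈ g.inc) ∧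
  ∀ (i : ℕ) (a : A), ars[i]? = some a → (a, i + 1) ∈ g.ia

/-- `t` is an output token of the configurator `u`. -/
def OutputTok (g : PreGraph V A L) (u t : V) : Prop :=
  ∃ a ∈ g.Arr, (a, (u, t)) ∈ g.inc

/-- `ts` is the input token-sequence of the configurator `u`. -/
def InputTokSeq (g : PreGraph V A L) (u : V) (ts : List V) : Prop :=
  ∃ ars : List A, InArrowSeq g u ars ∧
    List.Forall₂ (fun a v => (a, (v, u)) ∈ g.inc) ars ts

/-- `τs` is the input type-sequence of the configurator `u`. -/
def InputTypeSeq (g : PreGraph V A L) (u : V) (τs : List L) : Prop :=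
  ∃ ts : List V, InputTokSeq g u ts ∧ List.Forall₂ (fun v τ => (v, τ) ∈ g.tl) ts τs

/-- `g` is a configuration of the constructor `c` (with signature `(ins, out)`),
whose single configurator is `u`. -/
def IsConfiguration (le : Set (L × L)) (g : PreGraph V A L) (u : V) (c : L)
    (ins : List L) (out : L) : Prop :=
  IsGraph g ∧ g.Cf = {u} ∧ (u, c) ∈ g.cl ∧
  g.Tk = {v | ∃ a ∈ g.Arr, (a, (v, u)) ∈ g.inc ∨ (a, (u, v)) ∈ g.inc} ∧
  (∃! a0 : A, a0 ∈ g.Arr ∧ ∃ w, (a0, (u, w)) ∈ g.inc) ∧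
  (∀ a0 ∈ g.Arr, ∀ w : V, (a0, (u, w)) ∈ g.inc →
      (a0, 0) ∈ g.ia ∧ ∃ σ, (w, σ) ∈ g.tl ∧ (σ, out) ∈ le) ∧
  (∃ ars : List A, InArrowSeq g u ars ∧ ars.length = ins.length ∧
    ∀ (i : ℕ) (a : A) (τ : L), ars[i]? = some a → ins[i]? = some τ →
      ∃ w σ, (a, (w, u)) ∈ g.inc ∧ (w, σ) ∈ g.tl ∧ (σ, τ) ∈ le)

/-- A structure graph for the constructor specification `(C, sig)` over types `(Ty, le)`. -/
def IsStructureGraph (Ty : Set L) (le : Set (L × L)) (C : Set L)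
    (sig : Set (L × (List L × L))) (g : PreGraph V A L) : Prop :=
  IsGraph g ∧ (∀ x τ, (x, τ) ∈ g.tl → τ ∈ Ty) ∧
  ∀ u ∈ g.Cf, ∃ c ins out, (u, c) ∈ g.cl ∧ c ∈ C ∧ (c, (ins, out)) ∈ sig ∧
    IsConfiguration le (g.Nh u) u c ins out

/-! ## Construction spaces -/

/-- The raw data of a construction space: a type system, a constructor specification and
a structure graph. -/
structure CSpace (V A L : Type*) where
  Ty : Set L
  le : Set (L × L)
  C : Set L
  sig : Set (L × (List L × L))
  G : PreGraph V A L

instance : Union (CSpace V A L) :=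
  ⟨fun c d => ⟨c.Ty ∪ d.Ty, c.le ∪ d.le, c.C ∪ d.C, c.sig ∪ d.sig, c.G ∪ d.G⟩⟩

/-- The raw data forms a genuine construction space. -/
def IsCSpace (Cs : CSpace V A L) : Prop :=
  IsPartialOrderOn Cs.Ty Cs.le ∧ Disjoint Cs.C Cs.Ty ∧ IsFunctionOn Cs.sig Cs.C ∧
  (∀ c ins out, (c, (ins, out)) ∈ Cs.sig →
      ins ≠ [] ∧ (∀ τ ∈ ins, τ ∈ Cs.Ty) ∧ out ∈ Cs.Ty) ∧
  IsStructureGraph Cs.Ty Cs.le Cs.C Cs.sig Cs.G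

/-- Token-functionality of the constructors of a structure graph. -/
def TokenFunctional (g : PreGraph V A L) : Prop :=
  ∀ u u' c, u ∈ g.Cf → u' ∈ g.Cf → (u, c) ∈ g.cl → (u', c) ∈ g.cl →
    ∀ ts, InputTokSeq g u ts → InputTokSeq g u' ts →
      ∀ t t', OutputTok g u t → OutputTok g u' t' → t = t'

/-- Type-functionality of the constructors of a structure graph. -/
def TypeFunctional (g : PreGraph V A L) : Prop :=
  ∀ u u' c, u ∈ g.Cf → u' ∈ g.Cf → (u, c) ∈ g.cl → (u', c) ∈ g.cl →
    ∀ τs, InputTypeSeq g u τs → InputTypeSeq g u' τs →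
      ∀ t t' τ τ', OutputTok g u t → OutputTok g u' t' →
        (t, τ) ∈ g.tl → (t', τ') ∈ g.tl → τ = τ'

def IsFunctionalGraph (g : PreGraph V A L) : Prop :=
  TokenFunctional g ∧ TypeFunctional g

/-! ## Representational systems -/

/-- The raw data of a representational system: grammatical, entailment and identification
spaces. -/
structure RSystem (V A L : Type*) where
  Gs : CSpace V A L
  Es : CSpace V A L
  Is : CSpace V A L

instance : Union (RSystem V A L) :=
  ⟨fun r s => ⟨r.Gs ∪ s.Gs, r.Es ∪ s.Es, r.Is ∪ s.Is⟩⟩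

/-- The universal space of a representational system. -/
def RSystem.uspace (R : RSystem V A L) : CSpace V A L := (R.Gs ∪ R.Es) ∪ R.Is

/-- `R` is a representational system formed over the type system `(Ty, le)` and the
meta-type system `(MTy, Mle)`. -/
def IsRSystem (R : RSystem V A L) (Ty : Set L) (le : Set (L × L))
    (MTy : Set L) (Mle : Set (L × L)) : Prop :=
  IsPartialOrderOn Ty le ∧ IsPartialOrderOn MTy Mle ∧
  IsPartialOrderOn (Ty ∪ MTy) (le ∪ Mle) ∧
  R.Gs.Ty = Ty ∧ R.Gs.le = le ∧ IsCSpace R.Gs ∧ IsFunctionalGraph R.Gs.G ∧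
  R.Es.Ty = Ty ∧ R.Es.le = le ∧ IsCSpace R.Es ∧ R.Es.G.Tk ⊆ R.Gs.G.Tk ∧
  R.Is.Ty = Ty ∪ MTy ∧ R.Is.le = le ∪ Mle ∧ IsCSpace R.Is ∧
  (∀ x ∈ R.Is.G.Tk, x ∉ R.Gs.G.Tk → ∃ τ ∈ MTy, (x, τ) ∈ R.Is.G.tl) ∧
  (∀ x ∈ R.Is.G.Tk, (∃ u ∈ R.Is.G.Cf, OutputTok R.Is.G u x) → x ∉ R.Gs.G.Tk) ∧
  IsCSpace (R.Gs ∪ R.Es) ∧ IsCSpace (R.Gs ∪ R.Is) ∧ IsCSpace (R.Es ∪ R.Is) ∧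
  Disjoint R.Gs.C R.Es.C ∧ Disjoint R.Gs.C R.Is.C ∧ Disjoint R.Es.C R.Is.C

/-- `(R, R', Is'')` is an inter-representational-system encoding, where `R` is formed over
`(Ty, le)` and `(MTy, Mle)`, `R'` over `(Ty', le')` and `(MTy', Mle')`, and `Is''` is an
identification space formed over `(Ty ∪ Ty', le ∪ le')` and `(MTy'', Mle'')`. -/
def IsIRSE (R R' : RSystem V A L) (Is'' : CSpace V A L)
    (Ty : Set L) (le : Set (L × L)) (MTy : Set L) (Mle : Set (L × L))
    (Ty' : Set L) (le' : Set (L × L)) (MTy' : Set L) (Mle' : Set (L × L))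
    (MTy'' : Set L) (Mle'' : Set (L × L)) : Prop :=
  IsRSystem R Ty le MTy Mle ∧ IsRSystem R' Ty' le' MTy' Mle' ∧
  IsRSystem (R ∪ R') (Ty ∪ Ty') (le ∪ le') (MTy ∪ MTy') (Mle ∪ Mle') ∧
  IsPartialOrderOn MTy'' Mle'' ∧
  IsPartialOrderOn ((Ty ∪ Ty') ∪ MTy'') ((le ∪ le') ∪ Mle'') ∧
  Is''.Ty = (Ty ∪ Ty') ∪ MTy'' ∧ Is''.le = (le ∪ le') ∪ Mle'' ∧ IsCSpace Is'' ∧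
  MTy ∪ MTy' ⊆ MTy'' ∧ Mle ∪ Mle' ⊆ Mle'' ∧
  (∀ x ∈ Is''.G.Tk, x ∉ (R.Gs ∪ R'.Gs).G.Tk → ∃ τ ∈ MTy'', (x, τ) ∈ Is''.G.tl) ∧
  (∀ x ∈ Is''.G.Tk, (∃ u ∈ Is''.G.Cf, OutputTok Is''.G u x) →
      x ∉ (R.Gs ∪ R'.Gs).G.Tk) ∧
  IsCSpace ((R.Gs ∪ R'.Gs) ∪ Is'') ∧ IsCSpace ((R.Es ∪ R'.Es) ∪ Is'') ∧
  IsCSpace ((R.Is ∪ R'.Is) ∪ Is'') ∧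
  Disjoint Is''.C (R.Gs ∪ R'.Gs).C ∧ Disjoint Is''.C (R.Es ∪ R'.Es).C ∧
  Disjoint Is''.C (R.Is ∪ R'.Is).C

/-! ## Trails -/

/-- A trail candidate: a list of arrows together with an associated source and target vertex
(needed for the empty trail `[]_v`). -/
structure Trail (V A : Type*) where
  arrows : List A
  src : V
  tgt : V

/-- The empty trail `[]_v`. -/
def Trail.nil {V A : Type*} (v : V) : Trail V A := ⟨[], v, v⟩

/-- Concatenation `e ⊕ w` of trails. -/
def Trail.append {V A : Type*} (e w : Trail V A) : Trail V A :=
  ⟨e.arrows ++ w.arrows, e.src, w.tgt⟩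

/-- The image of a trail under vertex/arrow maps. -/
def Trail.map {V A : Type*} (fv : V → V) (fa : A → A) (tr : Trail V A) : Trail V A :=
  ⟨tr.arrows.map fa, fv tr.src, fv tr.tgt⟩

/-- The arrows chain through the graph from `s` to `t`. -/
def ChainIn (g : PreGraph V A L) : List A → V → V → Prop
  | [], s, t => s = t
  | a :: rest, s, t => a ∈ g.Arr ∧ ∃ m, (a, (s, m)) ∈ g.inc ∧ ChainIn g rest m t

/-- `tr` is a trail in `g`. -/
def IsTrailIn (g : PreGraph V A L) (tr : Trail V A) : Prop :=
  tr.arrows.Nodup ∧ ChainIn g tr.arrows tr.src tr.tgt ∧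
  tr.src ∈ g.Tk ∪ g.Cf ∧ tr.tgt ∈ g.Tk ∪ g.Cf

/-- A trail is well-formed provided its source and target are tokens. -/
def WellFormed (g : PreGraph V A L) (tr : Trail V A) : Prop :=
  tr.src ∈ g.Tk ∧ tr.tgt ∈ g.Tk

/-- `tr` is (source-)extendable by the arrow `a`. -/
def ExtendableBy (g : PreGraph V A L) (tr : Trail V A) (a : A) : Prop :=
  a ∈ g.Arr ∧ a ∉ tr.arrows ∧ ∃ s, (a, (s, tr.src)) ∈ g.inc

def Extendable (g : PreGraph V A L) (tr : Trail V A) : Prop :=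
  ∃ a, ExtendableBy g tr a

def NonExtendable (g : PreGraph V A L) (tr : Trail V A) : Prop :=
  ¬ Extendable g tr

/-- `TES g tr S` holds iff `S` is the trail extension sequence of the trail `tr` in `g`,
following the recursive definition of TES. -/
inductive TES (g : PreGraph V A L) : Trail V A → List (Trail V A) → Prop where
  | nonext (tr : Trail V A) (h : NonExtendable g tr) :
      TES g tr [⟨[], tr.src, tr.src⟩]
  | ext (tr : Trail V A) (a : A) (u : V) (ars : List A)
      (Ss : List (List (Trail V A)))
      (hext : ExtendableBy g tr a)
      (hinc : (a, (u, tr.src)) ∈ g.inc)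
      (hars : InArrowSeq g u ars)
      (hlen : Ss.length = ars.length)
      (hrec : ∀ (i : ℕ) (ai : A) (si : V) (Si : List (Trail V A)),
          ars[i]? = some ai → Ss[i]? = some Si → (ai, (si, u)) ∈ g.inc →
          TES g ⟨ai :: a :: tr.arrows, si, tr.tgt⟩ Si) :
      TES g tr (List.flatten (List.zipWith
        (fun (ai : A) (Si : List (Trail V A)) =>
          Si.map (fun e => (⟨e.arrows ++ [ai, a], e.src, tr.src⟩ : Trail V A)))
        ars Ss))

/-- The sequence of sources of a sequence of trails. -/
def srcSeq {V A : Type*} (S : List (Trail V A)) : List V := S.map Trail.src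

/-- The right product `S ◁ w`, appending the trail `w` to each trail in `S`. -/
def rprod {V A : Type*} (S : List (Trail V A)) (w : Trail V A) : List (Trail V A) :=
  S.map fun e => e.append w

/-! ## Constructions -/

/-- Every token is the target of at most one arrow. -/
def UniStructured (g : PreGraph V A L) : Prop :=
  ∀ x ∈ g.Tk, ∀ a ∈ g.Arr, ∀ b ∈ g.Arr,
    (∃ w, (a, (w, x)) ∈ g.inc) → (∃ w, (b, (w, x)) ∈ g.inc) → a = b

/-- `(g, t)` is a construction in the construction space `Cs`: `g` is a finite uni-structured
structure graph (a subgraph of the structure graph of `Cs`), `t` is a token of `g`, and every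
vertex of `g` is the source of a trail targeting `t`. -/
def IsConstruction (Cs : CSpace V A L) (g : PreGraph V A L) (t : V) : Prop :=
  g.Subgraph Cs.G ∧ IsStructureGraph Cs.Ty Cs.le Cs.C Cs.sig g ∧
  g.Tk.Finite ∧ g.Cf.Finite ∧ g.Arr.Finite ∧ UniStructured g ∧ t ∈ g.Tk ∧
  ∀ v ∈ g.Tk ∪ g.Cf, ∃ tr : Trail V A, IsTrailIn g tr ∧ tr.src = v ∧ tr.tgt = t

/-- `(g, t)` is a construction *in* `Cs` in the strong sense: moreover every configurator of `g`
has its full neighbourhood from the structure graph of `Cs`. -/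
def IsConstructionIn (Cs : CSpace V A L) (g : PreGraph V A L) (t : V) : Prop :=
  IsConstruction Cs g t ∧ ∀ u ∈ g.Cf, g.Nh u = Cs.G.Nh u

/-- A trivial construction: the construct is its only vertex. -/
def TrivialC (g : PreGraph V A L) (t : V) : Prop := g.Tk ∪ g.Cf = {t}

/-- A basic construction: exactly one configurator. -/
def BasicC (g : PreGraph V A L) : Prop := ∃ u, g.Cf = {u}

/-- The set of arrows occurring in a sequence of trails. -/
def trailArrowSet {V A : Type*} (TR : List (Trail V A)) : Set A :=
  {a | ∃ tr ∈ TR, a ∈ tr.arrows}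

/-- The vertices of the `TR`-graph: vertices incident to arrows of trails of `TR`,
together with the associated vertex of any empty trail of `TR`. -/
def trailVertexSet (g : PreGraph V A L) (TR : List (Trail V A)) : Set V :=
  {v | (∃ a ∈ trailArrowSet TR, ∃ w, (a, (v, w)) ∈ g.inc ∨ (a, (w, v)) ∈ g.inc) ∨
    ∃ tr ∈ TR, tr.arrows = [] ∧ tr.src = v}

/-- The `TR`-graph `v(TR)`. -/
def trGraph (g : PreGraph V A L) (TR : List (Trail V A)) : PreGraph V A L :=
  g.restrict (trailVertexSet g TR) (trailArrowSet TR)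

/-- `((g', t), ics)` is a split of the construction `(g, t)`: `(g', t)` is a generator and
`ics` is the corresponding induced construction sequence (each induced construction is
`(v(TES(tri)), source(tri))`, the TES being computed in `(g, t)`). -/
def IsSplit (Cs : CSpace V A L) (g : PreGraph V A L) (t : V)
    (g' : PreGraph V A L) (ics : List (PreGraph V A L × V)) : Prop :=
  IsConstruction Cs g' t ∧ g'.Subgraph g ∧
  ∃ trs : List (Trail V A), TES g' (Trail.nil t) trs ∧ ics.length = trs.length ∧
    ∀ (i : ℕ) (tri : Trail V A), trs[i]? = some tri →
      ∃ Si : List (Trail V A), TES g tri Si ∧ ics[i]? = some (trGraph g Si, tri.src)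

/-! ## Decompositions -/

/-- A decomposition tree: vertices labelled by a graph and a token, with the incoming arrows
of every vertex given in index order by a list of subtrees. -/
inductive DTree (V A L : Type*) where
  | node : PreGraph V A L → V → List (DTree V A L) → DTree V A L

def DTree.rootGraph : DTree V A L → PreGraph V A L
  | .node g _ _ => g

def DTree.rootTok : DTree V A L → V
  | .node _ t _ => t

def DTree.kids : DTree V A L → List (DTree V A L)
  | .node _ _ cs => cs

/-- `IsDecompositionOf Cs D g t` holds iff `D` is a decomposition of the construction
`(g, t)` in `Cs`. -/
inductive IsDecompositionOf (Cs : CSpace V A L) : DTree V A L → PreGraph V A L → V → Prop where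
  | single (g : PreGraph V A L) (t : V) (h : IsConstruction Cs g t) :
      IsDecompositionOf Cs (.node g t []) g t
  | split (g : PreGraph V A L) (t : V) (g' : PreGraph V A L)
      (ics : List (PreGraph V A L × V)) (cs : List (DTree V A L))
      (hc : IsConstruction Cs g t)
      (hsplit : IsSplit Cs g t g' ics)
      (hlen : cs.length = ics.length)
      (hrec : ∀ (i : ℕ) (ci : DTree V A L) (gi : PreGraph V A L) (ti : V),
          cs[i]? = some ci → ics[i]? = some (gi, ti) → IsDecompositionOf Cs ci gi ti) :
      IsDecompositionOf Cs (.node g' t cs) g t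

/-- `LcsRel D ls` holds iff `ls` is the leaf construction-sequence of `D`. -/
inductive LcsRel : DTree V A L → List (PreGraph V A L × V) → Prop where
  | leaf (g : PreGraph V A L) (t : V) : LcsRel (.node g t []) [(g, t)]
  | node (g : PreGraph V A L) (t : V) (cs : List (DTree V A L))
      (ls : List (List (PreGraph V A L × V)))
      (hne : cs ≠ []) (hlen : ls.length = cs.length)
      (h : ∀ (i : ℕ) (ci : DTree V A L) (li : List (PreGraph V A L × V)),
          cs[i]? = some ci → ls[i]? = some li → LcsRel ci li) :
      LcsRel (.node g t cs) ls.flatten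

/-- `(p, w)` is one of the constructions labelling a vertex of the decomposition tree. -/
inductive LabelOf : DTree V A L → PreGraph V A L → V → Prop where
  | root (g : PreGraph V A L) (t : V) (cs : List (DTree V A L)) :
      LabelOf (.node g t cs) g t
  | child (g : PreGraph V A L) (t : V) (cs : List (DTree V A L))
      (c : DTree V A L) (p : PreGraph V A L) (w : V) :
      c ∈ cs → LabelOf c p w → LabelOf (.node g t cs) p w

/-- The union of all the graphs labelling vertices of the decomposition tree
(the graph of the construction `ct(D)` of the decomposition `D`). -/
def DTree.ctGraph (D : DTree V A L) : PreGraph V A L :=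
  ⟨{x | ∃ p w, LabelOf D p w ∧ x ∈ p.Tk},
   {x | ∃ p w, LabelOf D p w ∧ x ∈ p.Cf},
   {a | ∃ p w, LabelOf D p w ∧ a ∈ p.Arr},
   {q | ∃ p w, LabelOf D p w ∧ q ∈ p.inc},
   {q | ∃ p w, LabelOf D p w ∧ q ∈ p.ia},
   {q | ∃ p w, LabelOf D p w ∧ q ∈ p.tl},
   {q | ∃ p w, LabelOf D p w ∧ q ∈ p.cl}⟩

/-- Every vertex label of the decomposition tree satisfies `P`. -/
inductive AllLabels (P : PreGraph V A L → V → Prop) : DTree V A L → Prop where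
  | node (g : PreGraph V A L) (t : V) (cs : List (DTree V A L)) :
      P g t → (∀ c, c ∈ cs → AllLabels P c) → AllLabels P (.node g t cs)

/-- The subtree of a decomposition tree at a given position (a path of child indices). -/
def subtreeAt : List ℕ → DTree V A L → Option (DTree V A L)
  | [], D => some D
  | i :: rest, .node _ _ cs =>
    match cs[i]? with
    | some c => subtreeAt rest c
    | none => none

/-! ## Patterns and embeddings -/

/-- An embedding of the graph `g` into the graph `p`: an isomorphism preserving arrow indices
and configurator labels, with token labels respecting the subtype relation `le`. -/
def IsEmbedding (le : Set (L × L)) (g p : PreGraph V A L) (fv : V → V) (fa : A → A) : Prop :=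
  (∀ x ∈ g.Tk, fv x ∈ p.Tk) ∧ (∀ x ∈ g.Cf, fv x ∈ p.Cf) ∧
  (∀ x ∈ g.Tk ∪ g.Cf, ∀ y ∈ g.Tk ∪ g.Cf, fv x = fv y → x = y) ∧
  (∀ y ∈ p.Tk, ∃ x ∈ g.Tk, fv x = y) ∧ (∀ y ∈ p.Cf, ∃ x ∈ g.Cf, fv x = y) ∧
  (∀ a ∈ g.Arr, fa a ∈ p.Arr) ∧
  (∀ a ∈ g.Arr, ∀ b ∈ g.Arr, fa a = fa b → a = b) ∧
  (∀ b ∈ p.Arr, ∃ a ∈ g.Arr, fa a = b) ∧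
  (∀ a v w, (a, (v, w)) ∈ g.inc → (fa a, (fv v, fv w)) ∈ p.inc) ∧
  (∀ a n, (a, n) ∈ g.ia → (fa a, n) ∈ p.ia) ∧
  (∀ u c, (u, c) ∈ g.cl → (fv u, c) ∈ p.cl) ∧
  (∀ x τ, (x, τ) ∈ g.tl → ∃ σ, (fv x, σ) ∈ p.tl ∧ (τ, σ) ∈ le)

/-- The construction `(g, t)` matches the pattern `(p, v)`. -/
def MatchesPattern (le : Set (L × L)) (g : PreGraph V A L) (t : V)
    (p : PreGraph V A L) (v : V) : Prop :=
  ∃ fv fa, IsEmbedding le g p fv fa ∧ fv t = v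

/-- `Ps` is a pattern space for `Cs`: a construction space over the same type system and
constructor specification such that every construction of `Cs` matches some construction
of `Ps`. -/
def IsPatternSpace (Cs Ps : CSpace V A L) : Prop :=
  Ps.Ty = Cs.Ty ∧ Ps.le = Cs.le ∧ Ps.C = Cs.C ∧ Ps.sig = Cs.sig ∧ IsCSpace Ps ∧
  ∀ g t, IsConstruction Cs g t →
    ∃ p v, IsConstruction Ps p v ∧ MatchesPattern Cs.le g t p v

/-- Vertex-wise matching of two same-shape decomposition trees under a common pair of maps. -/
inductive DMatches (le : Set (L × L)) (fv : V → V) (fa : A → A) :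
    DTree V A L → DTree V A L → Prop where
  | node (g : PreGraph V A L) (t : V) (p : PreGraph V A L) (v : V)
      (cs ds : List (DTree V A L))
      (hemb : IsEmbedding le g p fv fa) (ht : fv t = v)
      (hlen : cs.length = ds.length)
      (hrec : ∀ (i : ℕ) (ci di : DTree V A L), cs[i]? = some ci → ds[i]? = some di →
          DMatches le fv fa ci di) :
      DMatches le fv fa (.node g t cs) (.node p v ds)

/-- The decomposition `D` matches the (pattern) decomposition `Δ`: there is an arrow-index
preserving isomorphism of trees together with an embedding of `ct(D)` into `ct(Δ)` whose
restriction to each vertex label is an embedding into the corresponding pattern label. -/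
def DecompositionMatches (le : Set (L × L)) (D Δ : DTree V A L) : Prop :=
  ∃ fv fa, IsEmbedding le D.ctGraph Δ.ctGraph fv fa ∧ fv D.rootTok = Δ.rootTok ∧
    DMatches le fv fa D Δ

/-! ## Descriptions -/

/-- A description: a set of decompositions of patterns (constructions in the pattern
space `Ps`). -/
def IsDescriptionOf (Ps : CSpace V A L) (Ds : Set (DTree V A L)) : Prop :=
  ∀ Δ ∈ Ds, ∃ p v, IsConstruction Ps p v ∧ IsDecompositionOf Ps Δ p v

/-- The description `Ds` is complete for `Cs`. -/
def CompleteDescription (Cs : CSpace V A L) (Ds : Set (DTree V A L)) : Prop :=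
  ∀ g t, IsConstruction Cs g t →
    ∃ Δ ∈ Ds, ∃ D, IsDecompositionOf Cs D g t ∧ DecompositionMatches Cs.le D Δ

/-- The set of patterns labelling vertices of decompositions in `Ds`. -/
def PatternsOf (Ds : Set (DTree V A L)) : Set (PreGraph V A L × V) :=
  {pv | ∃ Δ ∈ Ds, LabelOf Δ pv.1 pv.2}

/-- Label-preserving isomorphism of patterns/constructions. -/
def LabelIsomorphic (g : PreGraph V A L) (t : V) (p : PreGraph V A L) (v : V) : Prop :=
  ∃ fv fa, IsEmbedding {q : L × L | q.1 = q.2} g p fv fa ∧ fv t = v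

/-- The description `Ds` is compact: finitely many patterns up to label-preserving
isomorphism. -/
def CompactDescription (Ds : Set (DTree V A L)) : Prop :=
  ∃ Reps : Set (PreGraph V A L × V), Reps.Finite ∧
    ∀ pv ∈ PatternsOf Ds, ∃ qw ∈ Reps, LabelIsomorphic pv.1 pv.2 qw.1 qw.2

/-! ## Transformation constraints and structural transformations -/

/-- A transformation-constraint-shaped triple: two patterns (or constructions) together with
a set of patterns (or constructions). -/
structure TConstraint (V A L : Type*) where
  pa : PreGraph V A L
  ca : V
  pb : PreGraph V A L
  cb : V
  Pc : Set (PreGraph V A L × V)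

/-- The union of the graphs of a set of patterns. -/
def pGraph (P : Set (PreGraph V A L × V)) : PreGraph V A L :=
  ⟨{x | ∃ pv ∈ P, x ∈ pv.1.Tk}, {x | ∃ pv ∈ P, x ∈ pv.1.Cf},
   {a | ∃ pv ∈ P, a ∈ pv.1.Arr}, {q | ∃ pv ∈ P, q ∈ pv.1.inc},
   {q | ∃ pv ∈ P, q ∈ pv.1.ia}, {q | ∃ pv ∈ P, q ∈ pv.1.tl},
   {q | ∃ pv ∈ P, q ∈ pv.1.cl}⟩

/-- A respectful embedding of the set of patterns `P` into the set of patterns `P'`. -/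
def RespectfulEmbedding (le : Set (L × L)) (P P' : Set (PreGraph V A L × V))
    (fv : V → V) (fa : A → A) : Prop :=
  IsEmbedding le (pGraph P) (pGraph P') fv fa ∧
  ∀ pv ∈ P, ∃ qw ∈ P', IsEmbedding le pv.1 qw.1 fv fa ∧ fv pv.2 = qw.2

/-- Satisfaction of one transformation-constraint-shaped triple by another: embeddings of the
first two components, a respectful embedding of the third, whose common underlying maps give
an isomorphism of the unions of the graphs. -/
def TCSatisfies (le : Set (L × L)) (s s' : TConstraint V A L) : Prop :=
  ∃ fv fa,
    IsEmbedding le s.pa s'.pa fv fa ∧ fv s.ca = s'.ca ∧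
    IsEmbedding le s.pb s'.pb fv fa ∧ fv s.cb = s'.cb ∧
    RespectfulEmbedding le s.Pc s'.Pc fv fa ∧
    IsEmbedding le ((s.pa ∪ s.pb) ∪ pGraph s.Pc) ((s'.pa ∪ s'.pb) ∪ pGraph s'.Pc) fv fa

/-- A transformation constraint for an encoding described by `(Ds, Ds', P'')`. -/
def IsTransformationConstraint (Ds Ds' : Set (DTree V A L))
    (P'' : Set (PreGraph V A L × V)) (s : TConstraint V A L) : Prop :=
  (s.pa, s.ca) ∈ PatternsOf Ds ∧ (s.pb, s.cb) ∈ PatternsOf Ds' ∧ s.Pc ⊆ P''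

/-- A constraint assignment for `Δ` and `Δ'`: a partial function (modelled with `Option`) on
pairs of vertices (paths) whose values are transformation constraints from `S0` matched by the
corresponding labels. -/
def IsConstraintAssignment (leR leR' : Set (L × L)) (S0 : Set (TConstraint V A L))
    (Δ Δ' : DTree V A L) (Lm : List ℕ → List ℕ → Option (TConstraint V A L)) : Prop :=
  ∀ pi pi' s, Lm pi pi' = some s → s ∈ S0 ∧
    (∃ δ, subtreeAt pi Δ = some δ ∧
        MatchesPattern leR δ.rootGraph δ.rootTok s.pa s.ca) ∧
    (∃ δ', subtreeAt pi' Δ' = some δ' ∧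
        MatchesPattern leR' δ'.rootGraph δ'.rootTok s.pb s.cb)

/-- The constraint assignment `Lm` is satisfied by the pair of decompositions `(D, D')`
(whose vertices correspond, via the shape-preserving matchings, to those of `Δ`, `Δ'`). -/
def LSatisfiedBy (leI : Set (L × L)) (Ip : CSpace V A L)
    (Lm : List ℕ → List ℕ → Option (TConstraint V A L)) (D D' : DTree V A L) : Prop :=
  ∀ pi pi' s d d', Lm pi pi' = some s →
    subtreeAt pi D = some d → subtreeAt pi' D' = some d' →
    ∃ Cset : Set (PreGraph V A L × V),
      (∀ pv ∈ Cset, IsConstruction Ip pv.1 pv.2) ∧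
      TCSatisfies leI ⟨d.rootGraph, d.rootTok, d'.rootGraph, d'.rootTok, Cset⟩ s

/-- `(g', t')` is a structural `L`-transformation of `(g, t)` (with respect to the pattern
decompositions `Δ`, `Δ'` for the universal spaces `Ru`, `Ru'` and the inter-property
identification space `Ip`). -/
def IsStructuralLTransformation (Ru Ru' Ip : CSpace V A L) (Δ Δ' : DTree V A L)
    (Lm : List ℕ → List ℕ → Option (TConstraint V A L))
    (g : PreGraph V A L) (t : V) (g' : PreGraph V A L) (t' : V) : Prop :=
  (∃ D, IsDecompositionOf Ru D g t ∧ DecompositionMatches Ru.le D Δ) ∧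
  (∃ D', IsDecompositionOf Ru' D' g' t' ∧ DecompositionMatches Ru'.le D' Δ') ∧
  ∀ D D', IsDecompositionOf Ru D g t → DecompositionMatches Ru.le D Δ →
    IsDecompositionOf Ru' D' g' t' → DecompositionMatches Ru'.le D' Δ' →
    LSatisfiedBy Ip.le Ip Lm D D'

/-- Partial satisfaction: the constraint is only checked at vertices of the pattern
decomposition `Δh` whose label is already a construction in `Ru'`. -/
def LPartialSatisfiedBy (leI : Set (L × L)) (Ip Ru' : CSpace V A L)
    (Lm : List ℕ → List ℕ → Option (TConstraint V A L)) (D Δh : DTree V A L) : Prop :=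
  ∀ pi pi' s d δh, Lm pi pi' = some s →
    subtreeAt pi D = some d → subtreeAt pi' Δh = some δh →
    IsConstructionIn Ru' δh.rootGraph δh.rootTok →
    ∃ Cset : Set (PreGraph V A L × V),
      (∀ pv ∈ Cset, IsConstruction Ip pv.1 pv.2) ∧
      TCSatisfies leI ⟨d.rootGraph, d.rootTok, δh.rootGraph, δh.rootTok, Cset⟩ s

/-- The pattern `(ph, vh)` (a construction in the pattern space `Ps'` for `Ru'`) is a partial
`L`-transformation of the construction `(g, t)`. -/
def IsPartialLTransformation (Ru Ru' Ip Ps' : CSpace V A L) (Δ Δ' : DTree V A L)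
    (Lm : List ℕ → List ℕ → Option (TConstraint V A L))
    (g : PreGraph V A L) (t : V) (ph : PreGraph V A L) (vh : V) : Prop :=
  (∃ D, IsDecompositionOf Ru D g t ∧ DecompositionMatches Ru.le D Δ) ∧
  (∃ Δh, IsDecompositionOf Ps' Δh ph vh ∧ DecompositionMatches Ru'.le Δh Δ') ∧
  ∀ D Δh, IsDecompositionOf Ru D g t → DecompositionMatches Ru.le D Δ →
    IsDecompositionOf Ps' Δh ph vh → DecompositionMatches Ru'.le Δh Δ' →
    LPartialSatisfiedBy Ip.le Ip Ru' Lm D Δh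

/-! ## Validity, soundness, leaf instantiation -/

/-- Validity of `Lm` for `(g, t)` and `(p, v)` at the pair of vertices `(pi, pi')`. -/
def ValidAt (Ru Ru' Ip Ps' : CSpace V A L) (Δ Δ' : DTree V A L)
    (Lm : List ℕ → List ℕ → Option (TConstraint V A L))
    (g : PreGraph V A L) (t : V) (p : PreGraph V A L) (v : V)
    (pi pi' : List ℕ) : Prop :=
  ∀ D Δh Dsub Δhsub Δsub Δsub',
    IsDecompositionOf Ru D g t → DecompositionMatches Ru.le D Δ →
    IsDecompositionOf Ps' Δh p v → DecompositionMatches Ru'.le Δh Δ' →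
    subtreeAt pi D = some Dsub → subtreeAt pi' Δh = some Δhsub →
    subtreeAt pi Δ = some Δsub → subtreeAt pi' Δ' = some Δsub' →
    IsConstructionIn Ru' Δhsub.ctGraph Δhsub.rootTok →
    IsStructuralLTransformation Ru Ru' Ip Δsub Δsub'
      (fun σ σ' => Lm (pi ++ σ) (pi' ++ σ'))
      Dsub.ctGraph Dsub.rootTok Δhsub.ctGraph Δhsub.rootTok

/-- Ancestor-validity: validity at every pair of proper descendants-in-the-tree
("ancestors" in the paper's in-tree terminology). -/
def AncestorValidAt (Ru Ru' Ip Ps' : CSpace V A L) (Δ Δ' : DTree V A L)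
    (Lm : List ℕ → List ℕ → Option (TConstraint V A L))
    (g : PreGraph V A L) (t : V) (p : PreGraph V A L) (v : V)
    (pi pi' : List ℕ) : Prop :=
  ∀ σ σ' : List ℕ, σ ≠ [] → σ' ≠ [] →
    (∃ d, subtreeAt (pi ++ σ) Δ = some d) → (∃ d', subtreeAt (pi' ++ σ') Δ' = some d') →
    ValidAt Ru Ru' Ip Ps' Δ Δ' Lm g t p v (pi ++ σ) (pi' ++ σ')

/-- Soundness of a constraint assignment. -/
def SoundAssignment (Ru Ru' Ip Ps' : CSpace V A L) (Δ Δ' : DTree V A L)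
    (Lm : List ℕ → List ℕ → Option (TConstraint V A L)) : Prop :=
  ∀ g t, IsConstructionIn Ru g t →
    (∃ D, IsDecompositionOf Ru D g t ∧ DecompositionMatches Ru.le D Δ) →
    ∀ p v, IsConstruction Ps' p v →
      (∃ Δh, IsDecompositionOf Ps' Δh p v ∧ DecompositionMatches Ru'.le Δh Δ') →
      ∀ pi pi', (∃ d, subtreeAt pi Δ = some d) → (∃ d', subtreeAt pi' Δ' = some d') →
        AncestorValidAt Ru Ru' Ip Ps' Δ Δ' Lm g t p v pi pi' →
        ValidAt Ru Ru' Ip Ps' Δ Δ' Lm g t p v pi pi'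

/-- The pattern `(p, v)` leaf-instantiates `Δ'`: it matches `Δ'` and every leaf of its
`Δ'`-canonical decomposition is labelled by a construction in `Ru'`. -/
def LeafInstantiates (Ru' Ps' : CSpace V A L) (Δ' : DTree V A L)
    (p : PreGraph V A L) (v : V) : Prop :=
  (∃ Δh, IsDecompositionOf Ps' Δh p v ∧ DecompositionMatches Ru'.le Δh Δ') ∧
  ∀ Δh, IsDecompositionOf Ps' Δh p v → DecompositionMatches Ru'.le Δh Δ' →
    ∀ pi δh, subtreeAt pi Δh = some δh → δh.kids = [] →
      IsConstructionIn Ru' δh.rootGraph δh.rootTok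

/-- A complete extension of a pattern `(p, v)` that leaf-instantiates `Δ'`. -/
def CompleteExtension (Ru' Ps' : CSpace V A L) (Δ' : DTree V A L)
    (p : PreGraph V A L) (v : V) (g' : PreGraph V A L) (t' : V) : Prop :=
  IsConstructionIn Ru' g' t' ∧
  ∃ fv fa, IsEmbedding Ru'.le g' p fv fa ∧ fv t' = v ∧
    ∀ Δh, IsDecompositionOf Ps' Δh p v → DecompositionMatches Ru'.le Δh Δ' →
      ∀ pi δh, subtreeAt pi Δh = some δh → δh.kids = [] →
        ∀ x ∈ δh.rootGraph.Tk, x ∈ g'.Tk ∧ fv x = x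

/-- `(g, t)` and `(p, v)` are valid at the leaves of `Δ` and `Δ'`. -/
def ValidAtLeaves (Ru Ru' Ip Ps' : CSpace V A L) (Δ Δ' : DTree V A L)
    (Lm : List ℕ → List ℕ → Option (TConstraint V A L))
    (g : PreGraph V A L) (t : V) (p : PreGraph V A L) (v : V) : Prop :=
  ∀ pi pi' δ δ', subtreeAt pi Δ = some δ → subtreeAt pi' Δ' = some δ' →
    δ.kids = [] → δ'.kids = [] →
    ValidAt Ru Ru' Ip Ps' Δ Δ' Lm g t p v pi pi'

theorem union_subset_iUnion {ι α : Type*} (S : ι → Set α) (i j : ι) : S i ∪ S j ⊆ ⋃ k, S k :=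
  Set.union_subset (Set.subset_iUnion S i) (Set.subset_iUnion S j)

/- Each partial-order axiom mentions at most two pairs, hence at most two of the relations, so it
holds for the union of a family once it holds for the union of every two members. -/
theorem isPartialOrderOn_iUnion {ι U : Type*} {Ty : ι → Set U} {le : ι → Set (U × U)}
    (h : ∀ i j, IsPartialOrderOn (Ty i ∪ Ty j) (le i ∪ le j)) :
    IsPartialOrderOn (⋃ i, Ty i) (⋃ i, le i) := by
  refine ⟨fun p hp => ?_, fun τ hτ => ?_, fun a b hab hba => ?_, fun a b c hab hbc => ?_⟩
  · obtain ⟨i, hp⟩ := Set.mem_iUnion.1 hp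
    obtain ⟨h1, h2⟩ := (h i i).1 p (.inl hp)
    exact ⟨union_subset_iUnion Ty i i h1, union_subset_iUnion Ty i i h2⟩
  · obtain ⟨i, hτ⟩ := Set.mem_iUnion.1 hτ
    exact union_subset_iUnion le i i ((h i i).2.1 τ (.inl hτ))
  · obtain ⟨i, hab⟩ := Set.mem_iUnion.1 hab
    obtain ⟨j, hba⟩ := Set.mem_iUnion.1 hba
    exact (h i j).2.2.1 a b (.inl hab) (.inr hba)
  · obtain ⟨i, hab⟩ := Set.mem_iUnion.1 hab
    obtain ⟨j, hbc⟩ := Set.mem_iUnion.1 hbc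
    exact union_subset_iUnion le i j ((h i j).2.2.2 a b c (.inl hab) (.inr hbc))

theorem iUnion_fin_three {α : Type*} (s t u : Set α) : ⋃ i, ![s, t, u] i = s ∪ t ∪ u := by
  ext; simp [Fin.exists_fin_succ, or_assoc]

/-- the union of pairwise compatible type systems with a third compatible type
system is a type system. -/
theorem union_of_pairwise_compatible_type_systems {U : Type*}
    (Ty1 Ty2 Ty3 : Set U) (le1 le2 le3 : Set (U × U))
    (h1 : IsPartialOrderOn Ty1 le1) (h2 : IsPartialOrderOn Ty2 le2)
    (h3 : IsPartialOrderOn Ty3 le3)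
    (h12 : IsPartialOrderOn (Ty1 ∪ Ty2) (le1 ∪ le2))
    (h13 : IsPartialOrderOn (Ty1 ∪ Ty3) (le1 ∪ le3))
    (h23 : IsPartialOrderOn (Ty2 ∪ Ty3) (le2 ∪ le3)) :
    IsPartialOrderOn ((Ty1 ∪ Ty2) ∪ Ty3) ((le1 ∪ le2) ∪ le3) := by
  have compatible : ∀ i j, IsPartialOrderOn (![Ty1, Ty2, Ty3] i ∪ ![Ty1, Ty2, Ty3] j)
      (![le1, le2, le3] i ∪ ![le1, le2, le3] j) := by
    intro i j
    fin_cases i <;> fin_cases j <;>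
      simpa only [Set.union_self, Set.union_comm] using ‹_›
  simpa only [iUnion_fin_three] using isPartialOrderOn_iUnion compatible

end RST
end

section
/- Let Cs1, Cs2 and Cs3 be pairwise compatible construction spaces. Then Cs1 ∪ Cs2 is compatible with Cs3; that is, the componentwise union (Cs1 ∪ Cs2) ∪ Cs3 is a construction space. -/
namespace RST

variable {V A L : Type*}

/-!
Apart from the configuration condition, every axiom of a construction space constrains at most
two elements at a time (antisymmetry and transitivity of the order, functionality of the
signature, incidence, index and labelling relations, the disjointness conditions), so it holds in a
union as soon as it holds in every pairwise union. The configuration condition is local to a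
configurator `u`, and compatibility adds no arrows at `u`: in `X ∪ Y` the configurator `u` of `X`
keeps its constructor, hence its signature, so it has exactly as many incoming arrows as in `X`
and still a unique outgoing one. Hence the neighbourhood of `u` in the union is its neighbourhood
in `X`. The argument applies to any family of pairwise compatible construction spaces.
-/

namespace IsFunctionOn

variable {α β ι : Type*} {R R' : Set (α × β)} {D D' : Set α}

theorem eq_of_mem (h : IsFunctionOn R D) {x : α} {y y' : β} (hy : (x, y) ∈ R)
    (hy' : (x, y') ∈ R) : y = y' := by
  obtain ⟨z, -, hz⟩ := h.2 x (h.1 _ hy)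
  exact (hz y hy).trans (hz y' hy').symm

theorem mem_of_subset (h : IsFunctionOn R D) (h' : IsFunctionOn R' D') (hsub : R' ⊆ R)
    {x : α} {y : β} (hx : x ∈ D') (hxy : (x, y) ∈ R) : (x, y) ∈ R' := by
  obtain ⟨y', hy', -⟩ := h'.2 x hx
  rwa [h.eq_of_mem hxy (hsub hy')]

theorem sep_fst_mem_eq (h : IsFunctionOn R D) (h' : IsFunctionOn R' D') (hsub : R' ⊆ R)
    {S : Set α} (hS : S ∩ D ⊆ D') : {q | q ∈ R ∧ q.1 ∈ S} = {q | q ∈ R' ∧ q.1 ∈ S} := by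
  ext q
  exact ⟨fun ⟨hq, hs⟩ => ⟨h.mem_of_subset h' hsub (hS ⟨hs, h.1 q hq⟩) hq, hs⟩,
    fun ⟨hq, hs⟩ => ⟨hsub hq, hs⟩⟩

theorem iUnion {R : ι → Set (α × β)} {D : ι → Set α}
    (h : ∀ i j, IsFunctionOn (R i ∪ R j) (D i ∪ D j)) :
    IsFunctionOn (⋃ i, R i) (⋃ i, D i) := by
  refine ⟨fun p hp => ?_, fun x hx => ?_⟩
  · obtain ⟨i, hp⟩ := Set.mem_iUnion.1 hp
    exact Set.mem_iUnion.2 ⟨i, by simpa using (h i i).1 p (Or.inl hp)⟩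
  · obtain ⟨i, hx⟩ := Set.mem_iUnion.1 hx
    obtain ⟨y, hy, -⟩ := (h i i).2 x (Or.inl hx)
    refine ⟨y, Set.mem_iUnion.2 ⟨i, by simpa using hy⟩, fun y' hy' => ?_⟩
    obtain ⟨j, hy'⟩ := Set.mem_iUnion.1 hy'
    exact (h j i).eq_of_mem (Or.inl hy') (Or.inr (by simpa using hy))

end IsFunctionOn

theorem IsPartialOrderOn.iUnion {U ι : Type*} {Ty : ι → Set U} {le : ι → Set (U × U)}
    (h : ∀ i j, IsPartialOrderOn (Ty i ∪ Ty j) (le i ∪ le j)) :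
    IsPartialOrderOn (⋃ i, Ty i) (⋃ i, le i) := by
  simp only [IsPartialOrderOn, Set.mem_iUnion]
  refine ⟨fun p ⟨i, hp⟩ => ?_, fun τ ⟨i, hτ⟩ => ?_, fun a b ⟨i, hab⟩ ⟨j, hba⟩ => ?_,
    fun a b c ⟨i, hab⟩ ⟨j, hbc⟩ => ?_⟩
  · obtain ⟨h1, h2⟩ := (h i i).1 p (Or.inl hp)
    exact ⟨⟨i, by simpa using h1⟩, ⟨i, by simpa using h2⟩⟩
  · exact ⟨i, by simpa using (h i i).2.1 τ (Or.inl hτ)⟩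
  · exact (h i j).2.2.1 a b (Or.inl hab) (Or.inr hba)
  · rcases (h i j).2.2.2 a b c (Or.inl hab) (Or.inr hbc) with hac | hac
    exacts [⟨i, hac⟩, ⟨j, hac⟩]

end RST

theorem Set.disjoint_iUnion_of_union {α ι : Type*} {s t : ι → Set α}
    (h : ∀ i j, Disjoint (s i ∪ s j) (t i ∪ t j)) : Disjoint (⋃ i, s i) (⋃ i, t i) :=
  Set.disjoint_iUnion_left.2 fun i => Set.disjoint_iUnion_right.2 fun j =>
    (h i j).mono Set.subset_union_left Set.subset_union_right

namespace RST

variable {V A L : Type*}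

attribute [ext] PreGraph CSpace

namespace PreGraph

def iUnion {ι : Type*} (g : ι → PreGraph V A L) : PreGraph V A L :=
  ⟨⋃ i, (g i).Tk, ⋃ i, (g i).Cf, ⋃ i, (g i).Arr, ⋃ i, (g i).inc, ⋃ i, (g i).ia,
    ⋃ i, (g i).tl, ⋃ i, (g i).cl⟩

theorem subgraph_iUnion {ι : Type*} (g : ι → PreGraph V A L) (i : ι) :
    (g i).Subgraph (iUnion g) :=
  ⟨Set.subset_iUnion (fun i => (g i).Tk) i, Set.subset_iUnion (fun i => (g i).Cf) i,
    Set.subset_iUnion (fun i => (g i).Arr) i, Set.subset_iUnion (fun i => (g i).inc) i,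
    Set.subset_iUnion (fun i => (g i).ia) i, Set.subset_iUnion (fun i => (g i).tl) i,
    Set.subset_iUnion (fun i => (g i).cl) i⟩

theorem subgraph_union_left (g h : PreGraph V A L) : g.Subgraph (g ∪ h) :=
  ⟨Set.subset_union_left, Set.subset_union_left, Set.subset_union_left,
    Set.subset_union_left, Set.subset_union_left, Set.subset_union_left,
    Set.subset_union_left⟩

theorem union_self (g : PreGraph V A L) : g ∪ g = g := by
  ext <;> exact or_self_iff

end PreGraph

theorem IsGraph.iUnion {ι : Type*} {g : ι → PreGraph V A L}
    (h : ∀ i j, IsGraph (g i ∪ g j)) : IsGraph (PreGraph.iUnion g) := by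
  refine ⟨Set.disjoint_iUnion_of_union fun i j => (h i j).1,
    IsFunctionOn.iUnion fun i j => (h i j).2.1, fun a v w hvw => ?_,
    IsFunctionOn.iUnion fun i j => (h i j).2.2.2.1,
    IsFunctionOn.iUnion fun i j => (h i j).2.2.2.2.1,
    IsFunctionOn.iUnion fun i j => (h i j).2.2.2.2.2⟩
  obtain ⟨i, hvw⟩ := Set.mem_iUnion.1 hvw
  have hsub := PreGraph.subgraph_iUnion g i
  rw [← PreGraph.union_self (g i)] at hsub
  exact ((h i i).2.2.1 a v w (Or.inl hvw)).imp (And.imp (hsub.1 ·) (hsub.2.1 ·))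
    (And.imp (hsub.2.1 ·) (hsub.1 ·))

namespace PreGraph

variable {g h : PreGraph V A L} {u : V}

theorem adjTo_subset (hg : IsGraph g) (hu : u ∈ g.Cf) : g.adjTo u ⊆ g.Tk ∪ g.Cf := by
  rintro x (rfl | ⟨a, -, hx | hx⟩)
  · exact Or.inr hu
  · rcases hg.2.2.1 a x u hx with ⟨h, -⟩ | ⟨h, -⟩
    exacts [Or.inl h, Or.inr h]
  · rcases hg.2.2.1 a u x hx with ⟨-, h⟩ | ⟨-, h⟩
    exacts [Or.inr h, Or.inl h]

theorem incidentArrows_subset (g : PreGraph V A L) (u : V) : g.incidentArrows u ⊆ g.Arr :=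
  fun _ ha => ha.1

theorem Nh_eq_of_subgraph (hg : IsGraph g) (hh : IsGraph h) (hsub : h.Subgraph g)
    (hu : u ∈ h.Cf) (harr : g.incidentArrows u ⊆ h.Arr) : g.Nh u = h.Nh u := by
  obtain ⟨hTk, hCf, hArr, hinc, hia, htl, hcl⟩ := hsub
  have inc_of_incident : ∀ {a p}, a ∈ g.incidentArrows u → (a, p) ∈ g.inc → (a, p) ∈ h.inc :=
    fun ha hp => hg.2.1.mem_of_subset hh.2.1 hinc (harr ha) hp
  have hA : g.incidentArrows u = h.incidentArrows u := by
    refine Set.Subset.antisymm (fun a ha => ?_)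
      fun a ⟨ha, v, hv⟩ => ⟨hArr ha, v, hv.imp (hinc ·) (hinc ·)⟩
    have ⟨_, v, hv⟩ := ha
    exact ⟨harr ha, v, hv.imp (inc_of_incident ha) (inc_of_incident ha)⟩
  have hV : g.adjTo u = h.adjTo u := by
    refine Set.Subset.antisymm ?_ ?_
    · rintro x (rfl | ⟨a, ha, hx⟩)
      · exact Or.inl rfl
      have ha' : a ∈ g.incidentArrows u := ⟨ha, x, hx⟩
      exact Or.inr ⟨a, harr ha', hx.imp (inc_of_incident ha') (inc_of_incident ha')⟩
    · rintro x (rfl | ⟨a, ha, hx⟩)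
      exacts [Or.inl rfl, Or.inr ⟨a, hArr ha, hx.imp (hinc ·) (hinc ·)⟩]
  have hVTk : h.adjTo u ∩ g.Tk ⊆ h.Tk := fun x ⟨hx, hxg⟩ =>
    (adjTo_subset hh hu hx).resolve_right fun hxh => hg.1.ne_of_mem hxg (hCf hxh) rfl
  have hVCf : h.adjTo u ∩ g.Cf ⊆ h.Cf := fun x ⟨hx, hxg⟩ =>
    (adjTo_subset hh hu hx).resolve_left fun hxh => hg.1.ne_of_mem (hTk hxh) hxg rfl
  have hAArr : h.incidentArrows u ∩ g.Arr ⊆ h.Arr := fun _ ha => ha.1.1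
  simp only [Nh, restrict, hA, hV]
  congr 1
  · exact Set.Subset.antisymm (fun x hx => ⟨hVTk ⟨hx.2, hx.1⟩, hx.2⟩)
      fun x hx => ⟨hTk hx.1, hx.2⟩
  · exact Set.Subset.antisymm (fun x hx => ⟨hVCf ⟨hx.2, hx.1⟩, hx.2⟩)
      fun x hx => ⟨hCf hx.1, hx.2⟩
  · rw [Set.inter_eq_right.2 ((incidentArrows_subset h u).trans hArr),
      Set.inter_eq_right.2 (incidentArrows_subset h u)]
  · exact hg.2.1.sep_fst_mem_eq hh.2.1 hinc hAArr
  · exact hg.2.2.2.1.sep_fst_mem_eq hh.2.2.2.1 hia hAArr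
  · exact hg.2.2.2.2.1.sep_fst_mem_eq hh.2.2.2.2.1 htl hVTk
  · exact hg.2.2.2.2.2.sep_fst_mem_eq hh.2.2.2.2.2 hcl hVCf

theorem Nh_incoming_iff {a : A} :
    (a ∈ (g.Nh u).Arr ∧ ∃ w, (a, (w, u)) ∈ (g.Nh u).inc) ↔
      (a ∈ g.Arr ∧ ∃ w, (a, (w, u)) ∈ g.inc) :=
  ⟨fun ⟨⟨ha, _⟩, w, hw, _⟩ => ⟨ha, w, hw⟩,
    fun ⟨ha, w, hw⟩ => ⟨⟨ha, ha, w, Or.inl hw⟩, w, hw, ha, w, Or.inl hw⟩⟩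

theorem Nh_outgoing_iff {a : A} :
    (a ∈ (g.Nh u).Arr ∧ ∃ w, (a, (u, w)) ∈ (g.Nh u).inc) ↔
      (a ∈ g.Arr ∧ ∃ w, (a, (u, w)) ∈ g.inc) :=
  ⟨fun ⟨⟨ha, _⟩, w, hw, _⟩ => ⟨ha, w, hw⟩,
    fun ⟨ha, w, hw⟩ => ⟨⟨ha, ha, w, Or.inr hw⟩, w, hw, ha, w, Or.inr hw⟩⟩

theorem mem_Arr_of_inArrowSeq (hsub : h.Subgraph g) {ars ars' : List A}
    (hh : InArrowSeq (h.Nh u) u ars) (hg : InArrowSeq (g.Nh u) u ars')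
    (hlen : ars'.length ≤ ars.length) {a : A} {w : V} (ha : a ∈ g.Arr)
    (hw : (a, (w, u)) ∈ g.inc) : a ∈ h.Arr := by
  have hsubset : ars ⊆ ars' := fun b hb => by
    obtain ⟨hb, w, hw⟩ := Nh_incoming_iff.1 ((hh.2.1 b).1 hb)
    exact (hg.2.1 b).2 (Nh_incoming_iff.2 ⟨hsub.2.2.1 hb, w, hsub.2.2.2.1 hw⟩)
  have hperm : ars.Perm ars' := (hh.1.subperm hsubset).perm_of_length_le hlen
  have hmem : a ∈ ars := hperm.mem_iff.2 ((hg.2.1 a).2 (Nh_incoming_iff.2 ⟨ha, w, hw⟩))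
  exact (Nh_incoming_iff.1 ((hh.2.1 a).1 hmem)).1

theorem mem_Arr_of_outgoing (hsub : h.Subgraph g)
    (hh : ∃ a₀, a₀ ∈ (h.Nh u).Arr ∧ ∃ w, (a₀, (u, w)) ∈ (h.Nh u).inc)
    (hg : ∃! a₀, a₀ ∈ (g.Nh u).Arr ∧ ∃ w, (a₀, (u, w)) ∈ (g.Nh u).inc) {a : A} {w : V}
    (ha : a ∈ g.Arr) (hw : (a, (u, w)) ∈ g.inc) : a ∈ h.Arr := by
  obtain ⟨a₀, ha₀⟩ := hh
  simp only [Nh_outgoing_iff] at ha₀ hg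
  obtain ⟨ha₀, w₀, hw₀⟩ := ha₀
  rwa [hg.unique ⟨ha, w, hw⟩ ⟨hsub.2.2.1 ha₀, w₀, hsub.2.2.2.1 hw₀⟩]

end PreGraph

theorem IsConfiguration.mono {le le' : Set (L × L)} (hle : le ⊆ le') {g : PreGraph V A L}
    {u : V} {c : L} {ins : List L} {out : L} (h : IsConfiguration le g u c ins out) :
    IsConfiguration le' g u c ins out := by
  obtain ⟨hg, hCf, hcl, hTk, hout, hout_le, ars, hars, hlen, hins_le⟩ := h
  refine ⟨hg, hCf, hcl, hTk, hout, fun a ha w hw => ?_, ars, hars, hlen,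
    fun i a τ hi hτ => ?_⟩
  · obtain ⟨hia, σ, hσ, hσout⟩ := hout_le a ha w hw
    exact ⟨hia, σ, hσ, hle hσout⟩
  · obtain ⟨w, σ, hw, hσ, hστ⟩ := hins_le i a τ hi hτ
    exact ⟨w, σ, hw, hσ, hle hστ⟩

namespace CSpace

theorem union_self (X : CSpace V A L) : X ∪ X = X := by
  ext <;> exact or_self_iff

theorem union_comm (X Y : CSpace V A L) : X ∪ Y = Y ∪ X := by
  ext <;> exact or_comm

theorem incidentArrows_subset_of_union {X Y : CSpace V A L} (hX : IsCSpace X)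
    (hXY : IsCSpace (X ∪ Y)) {u : V} (hu : u ∈ X.G.Cf) :
    (X ∪ Y).G.incidentArrows u ⊆ X.G.Arr := by
  have hsub : X.G.Subgraph (X ∪ Y).G := PreGraph.subgraph_union_left _ _
  obtain ⟨c, ins, out, hcl, -, hsig, hconf⟩ := hX.2.2.2.2.2.2 u hu
  obtain ⟨c', ins', out', hcl', -, hsig', hconf'⟩ := hXY.2.2.2.2.2.2 u (hsub.2.1 hu)
  obtain rfl : c' = c := hXY.2.2.2.2.1.2.2.2.2.2.eq_of_mem hcl' (hsub.2.2.2.2.2.2 hcl)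
  obtain ⟨rfl, -⟩ : ins' = ins ∧ out' = out :=
    Prod.ext_iff.1 (hXY.2.2.1.eq_of_mem hsig' (Or.inl hsig))
  rintro a ⟨ha, v, hin | hout⟩
  · obtain ⟨ars, hars, hlen, -⟩ := hconf.2.2.2.2.2.2
    obtain ⟨ars', hars', hlen', -⟩ := hconf'.2.2.2.2.2.2
    exact PreGraph.mem_Arr_of_inArrowSeq hsub hars hars' (hlen'.trans hlen.symm).le ha hin
  · exact PreGraph.mem_Arr_of_outgoing hsub hconf.2.2.2.2.1.exists hconf'.2.2.2.2.1 ha hout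

variable {ι : Type*}

def iUnion (Cs : ι → CSpace V A L) : CSpace V A L :=
  ⟨⋃ i, (Cs i).Ty, ⋃ i, (Cs i).le, ⋃ i, (Cs i).C, ⋃ i, (Cs i).sig,
    PreGraph.iUnion fun i => (Cs i).G⟩

theorem Nh_iUnion {Cs : ι → CSpace V A L} (h : ∀ i j, IsCSpace (Cs i ∪ Cs j))
    (hG : IsGraph (iUnion Cs).G) {i : ι} {u : V} (hu : u ∈ (Cs i).G.Cf) :
    (iUnion Cs).G.Nh u = (Cs i).G.Nh u := by
  have hCs : ∀ i, IsCSpace (Cs i) := fun i => (Cs i).union_self ▸ h i i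
  refine PreGraph.Nh_eq_of_subgraph hG (hCs i).2.2.2.2.1
    (PreGraph.subgraph_iUnion (fun j => (Cs j).G) i) hu ?_
  rintro a ⟨ha, v, hv⟩
  obtain ⟨j, ha⟩ := Set.mem_iUnion.1 ha
  have hinc : ∀ {p}, (a, p) ∈ (iUnion Cs).G.inc → (a, p) ∈ (Cs j).G.inc :=
    hG.2.1.mem_of_subset (hCs j).2.2.2.2.1.2.1
      (PreGraph.subgraph_iUnion (fun j => (Cs j).G) j).2.2.2.1 ha
  exact incidentArrows_subset_of_union (hCs i) (h i j) hu
    ⟨Or.inr ha, v, hv.imp (Or.inr <| hinc ·) (Or.inr <| hinc ·)⟩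

theorem isCSpace_iUnion {Cs : ι → CSpace V A L} (h : ∀ i j, IsCSpace (Cs i ∪ Cs j)) :
    IsCSpace (iUnion Cs) := by
  have hCs : ∀ i, IsCSpace (Cs i) := fun i => (Cs i).union_self ▸ h i i
  have hG : IsGraph (iUnion Cs).G := IsGraph.iUnion fun i j => (h i j).2.2.2.2.1
  refine ⟨IsPartialOrderOn.iUnion fun i j => (h i j).1,
    Set.disjoint_iUnion_of_union fun i j => (h i j).2.1,
    IsFunctionOn.iUnion fun i j => (h i j).2.2.1, fun c ins out hsig => ?_, hG,
    fun x τ hxτ => ?_, fun u hu => ?_⟩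
  · obtain ⟨i, hsig⟩ := Set.mem_iUnion.1 hsig
    obtain ⟨hne, hins, hout⟩ := (hCs i).2.2.2.1 c ins out hsig
    exact ⟨hne, fun τ hτ => Set.mem_iUnion.2 ⟨i, hins τ hτ⟩, Set.mem_iUnion.2 ⟨i, hout⟩⟩
  · obtain ⟨i, hxτ⟩ := Set.mem_iUnion.1 hxτ
    exact Set.mem_iUnion.2 ⟨i, (hCs i).2.2.2.2.2.1 x τ hxτ⟩
  · obtain ⟨i, hu⟩ := Set.mem_iUnion.1 hu
    obtain ⟨c, ins, out, hcl, hc, hsig, hconf⟩ := (hCs i).2.2.2.2.2.2 u hu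
    refine ⟨c, ins, out, Set.mem_iUnion.2 ⟨i, hcl⟩, Set.mem_iUnion.2 ⟨i, hc⟩,
      Set.mem_iUnion.2 ⟨i, hsig⟩, ?_⟩
    rw [Nh_iUnion h hG hu]
    exact hconf.mono (Set.subset_iUnion (fun i => (Cs i).le) i)

theorem union_union_eq_iUnion (X Y Z : CSpace V A L) : X ∪ Y ∪ Z = iUnion ![X, Y, Z] := by
  ext <;> simp only [iUnion, PreGraph.iUnion, Set.mem_iUnion, Fin.exists_fin_succ,
    Matrix.cons_val_zero, Matrix.cons_val_succ, Matrix.cons_val_fin_one, exists_const] <;>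
    exact or_assoc

end CSpace

/-- the union of pairwise compatible construction spaces with a third compatible
construction space is a construction space. -/
theorem union_of_pairwise_compatible_cspaces {V A L : Type*}
    (Cs1 Cs2 Cs3 : CSpace V A L)
    (h1 : IsCSpace Cs1) (h2 : IsCSpace Cs2) (h3 : IsCSpace Cs3)
    (h12 : IsCSpace (Cs1 ∪ Cs2)) (h13 : IsCSpace (Cs1 ∪ Cs3))
    (h23 : IsCSpace (Cs2 ∪ Cs3)) :
    IsCSpace ((Cs1 ∪ Cs2) ∪ Cs3) := by
  rw [CSpace.union_union_eq_iUnion]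
  refine CSpace.isCSpace_iUnion fun i j => ?_
  fin_cases i <;> fin_cases j <;>
    simp only [Fin.zero_eta, Fin.mk_one, Fin.reduceFinMk, Matrix.cons_val, CSpace.union_self]
  exacts [h1, h12, h13, CSpace.union_comm Cs1 Cs2 ▸ h12, h2, h23,
    CSpace.union_comm Cs1 Cs3 ▸ h13, CSpace.union_comm Cs2 Cs3 ▸ h23, h3]

end RST
end

section
/- Let R = (Gs, Es, Is) be a representational system. Then the componentwise union Gs ∪ Es ∪ Is (the universal space of R) is a construction space. -/
namespace RST

variable {V A L : Type*}

/-! The universal space `(Gs ∪ Es) ∪ Is` is glued from the pairwise unions `Gs ∪ Es`,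
`Gs ∪ Is`, `Es ∪ Is`, which are construction spaces by compatibility. Every axiom of a
construction space speaks about at most two items at a time (two order pairs, two arrows, ...),
and any two items of a threefold union already lie in one of the pairwise unions. The only
non-local condition is that the neighbourhood of a configurator `u` is a configuration: its
incoming arrows may come from all three spaces. But any two of them lie in a common pairwise
union, where `u` carries the same constructor and signature, so indices of incoming arrows
determine the arrows, and the in-arrow sequence of `u` in one pairwise union is already the
in-arrow sequence of `u` in the universal space. -/

section UnionOfThree

variable {α β : Type*} {s₁ s₂ s₃ : Set α}

lemma subset_union3_13 : s₁ ∪ s₃ ⊆ s₁ ∪ s₂ ∪ s₃ :=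
  Set.union_subset_union_left _ Set.subset_union_left

lemma subset_union3_23 : s₂ ∪ s₃ ⊆ s₁ ∪ s₂ ∪ s₃ :=
  Set.union_subset_union_left _ Set.subset_union_right

lemma mem_pairwise_union_of_mem_union3 {x y : α}
    (hx : x ∈ s₁ ∪ s₂ ∪ s₃) (hy : y ∈ s₁ ∪ s₂ ∪ s₃) :
    (x ∈ s₁ ∪ s₂ ∧ y ∈ s₁ ∪ s₂) ∨ (x ∈ s₁ ∪ s₃ ∧ y ∈ s₁ ∪ s₃) ∨
      (x ∈ s₂ ∪ s₃ ∧ y ∈ s₂ ∪ s₃) := by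
  simp only [Set.mem_union] at *
  tauto

lemma disjoint_union3 {t₁ t₂ t₃ : Set α} (h₁₂ : Disjoint (s₁ ∪ s₂) (t₁ ∪ t₂))
    (h₁₃ : Disjoint (s₁ ∪ s₃) (t₁ ∪ t₃)) (h₂₃ : Disjoint (s₂ ∪ s₃) (t₂ ∪ t₃)) :
    Disjoint (s₁ ∪ s₂ ∪ s₃) (t₁ ∪ t₂ ∪ t₃) := by
  simp only [Set.disjoint_union_left, Set.disjoint_union_right] at *
  tauto

lemma isPartialOrderOn_union3 {R₁ R₂ R₃ : Set (α × α)}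
    (h₁₂ : IsPartialOrderOn (s₁ ∪ s₂) (R₁ ∪ R₂)) (h₁₃ : IsPartialOrderOn (s₁ ∪ s₃) (R₁ ∪ R₃))
    (h₂₃ : IsPartialOrderOn (s₂ ∪ s₃) (R₂ ∪ R₃)) :
    IsPartialOrderOn (s₁ ∪ s₂ ∪ s₃) (R₁ ∪ R₂ ∪ R₃) := by
  refine ⟨?_, ?_, fun a b hab hba => ?_, fun a b c hab hbc => ?_⟩
  · rintro p (hp | hp)
    · exact (h₁₂.1 p hp).imp (Or.inl ·) (Or.inl ·)
    · exact (h₁₃.1 p (Or.inr hp)).imp (subset_union3_13 ·) (subset_union3_13 ·)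
  · rintro τ (hτ | hτ)
    · exact Or.inl (h₁₂.2.1 τ hτ)
    · exact subset_union3_13 (h₁₃.2.1 τ (Or.inr hτ))
  · rcases mem_pairwise_union_of_mem_union3 hab hba with ⟨h, h'⟩ | ⟨h, h'⟩ | ⟨h, h'⟩
    · exact h₁₂.2.2.1 a b h h'
    · exact h₁₃.2.2.1 a b h h'
    · exact h₂₃.2.2.1 a b h h'
  · rcases mem_pairwise_union_of_mem_union3 hab hbc with ⟨h, h'⟩ | ⟨h, h'⟩ | ⟨h, h'⟩
    · exact Or.inl (h₁₂.2.2.2 a b c h h')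
    · exact subset_union3_13 (h₁₃.2.2.2 a b c h h')
    · exact subset_union3_23 (h₂₃.2.2.2 a b c h h')

lemma isFunctionOn_union3 {R₁ R₂ R₃ : Set (α × β)} {D₁ D₂ D₃ : Set α}
    (h₁₂ : IsFunctionOn (R₁ ∪ R₂) (D₁ ∪ D₂)) (h₁₃ : IsFunctionOn (R₁ ∪ R₃) (D₁ ∪ D₃))
    (h₂₃ : IsFunctionOn (R₂ ∪ R₃) (D₂ ∪ D₃)) :
    IsFunctionOn (R₁ ∪ R₂ ∪ R₃) (D₁ ∪ D₂ ∪ D₃) := by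
  refine ⟨?_, fun x hx => ?_⟩
  · rintro p (hp | hp)
    · exact Or.inl (h₁₂.1 p hp)
    · exact subset_union3_13 (h₁₃.1 p (Or.inr hp))
  have hunique : ∀ y y', (x, y) ∈ R₁ ∪ R₂ ∪ R₃ → (x, y') ∈ R₁ ∪ R₂ ∪ R₃ → y = y' := by
    intro y y' hy hy'
    rcases mem_pairwise_union_of_mem_union3 hy hy' with ⟨h, h'⟩ | ⟨h, h'⟩ | ⟨h, h'⟩
    · exact (h₁₂.2 x (h₁₂.1 _ h)).unique h h'
    · exact (h₁₃.2 x (h₁₃.1 _ h)).unique h h'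
    · exact (h₂₃.2 x (h₂₃.1 _ h)).unique h h'
  obtain ⟨y, hy⟩ : ∃ y, (x, y) ∈ R₁ ∪ R₂ ∪ R₃ := by
    rcases hx with hx | hx
    · obtain ⟨y, hy, -⟩ := h₁₂.2 x hx
      exact ⟨y, Or.inl hy⟩
    · obtain ⟨y, hy, -⟩ := h₁₃.2 x (Or.inr hx)
      exact ⟨y, subset_union3_13 hy⟩
  exact ⟨y, hy, fun y' hy' => hunique y' y hy' hy⟩

lemma isGraph_union3 {g₁ g₂ g₃ : PreGraph V A L} (h₁₂ : IsGraph (g₁ ∪ g₂))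
    (h₁₃ : IsGraph (g₁ ∪ g₃)) (h₂₃ : IsGraph (g₂ ∪ g₃)) : IsGraph (g₁ ∪ g₂ ∪ g₃) := by
  obtain ⟨dis₁₂, inc₁₂, bip₁₂, ia₁₂, tl₁₂, cl₁₂⟩ := h₁₂
  obtain ⟨dis₁₃, inc₁₃, bip₁₃, ia₁₃, tl₁₃, cl₁₃⟩ := h₁₃
  obtain ⟨dis₂₃, inc₂₃, -, ia₂₃, tl₂₃, cl₂₃⟩ := h₂₃
  refine ⟨disjoint_union3 dis₁₂ dis₁₃ dis₂₃, isFunctionOn_union3 inc₁₂ inc₁₃ inc₂₃, ?_,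
    isFunctionOn_union3 ia₁₂ ia₁₃ ia₂₃, isFunctionOn_union3 tl₁₂ tl₁₃ tl₂₃,
    isFunctionOn_union3 cl₁₂ cl₁₃ cl₂₃⟩
  rintro a v w (h | h)
  · exact (bip₁₂ a v w h).imp (And.imp (Or.inl ·) (Or.inl ·)) (And.imp (Or.inl ·) (Or.inl ·))
  · exact (bip₁₃ a v w (Or.inr h)).imp
      (And.imp (subset_union3_13 ·) (subset_union3_13 ·))
      (And.imp (subset_union3_13 ·) (subset_union3_13 ·))

end UnionOfThree

namespace PreGraph

variable {g h : PreGraph V A L} {u v w : V} {a : A}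

lemma Subgraph.tk (hs : h.Subgraph g) : h.Tk ⊆ g.Tk := hs.1
lemma Subgraph.cf (hs : h.Subgraph g) : h.Cf ⊆ g.Cf := hs.2.1
lemma Subgraph.arr (hs : h.Subgraph g) : h.Arr ⊆ g.Arr := hs.2.2.1
lemma Subgraph.inc (hs : h.Subgraph g) : h.inc ⊆ g.inc := hs.2.2.2.1
lemma Subgraph.ia (hs : h.Subgraph g) : h.ia ⊆ g.ia := hs.2.2.2.2.1
lemma Subgraph.tl (hs : h.Subgraph g) : h.tl ⊆ g.tl := hs.2.2.2.2.2.1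
lemma Subgraph.cl (hs : h.Subgraph g) : h.cl ⊆ g.cl := hs.2.2.2.2.2.2

lemma Subgraph.adjTo_subset (hs : h.Subgraph g) : h.adjTo u ⊆ g.adjTo u := by
  rintro v (hv | ⟨a, ha, hq⟩)
  · exact Or.inl hv
  · exact Or.inr ⟨a, hs.arr ha, hq.imp (hs.inc ·) (hs.inc ·)⟩

lemma Subgraph.incidentArrows_subset (hs : h.Subgraph g) :
    h.incidentArrows u ⊆ g.incidentArrows u := by
  rintro a ⟨ha, v, hq⟩
  exact ⟨hs.arr ha, v, hq.imp (hs.inc ·) (hs.inc ·)⟩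

lemma Subgraph.nh (hs : h.Subgraph g) (u : V) : (h.Nh u).Subgraph (g.Nh u) := by
  have hV := hs.adjTo_subset (u := u)
  have hA := hs.incidentArrows_subset (u := u)
  exact ⟨Set.inter_subset_inter hs.tk hV, Set.inter_subset_inter hs.cf hV,
    Set.inter_subset_inter hs.arr hA, fun q hq => ⟨hs.inc hq.1, hA hq.2⟩,
    fun q hq => ⟨hs.ia hq.1, hA hq.2⟩, fun q hq => ⟨hs.tl hq.1, hV hq.2⟩,
    fun q hq => ⟨hs.cl hq.1, hV hq.2⟩⟩

end PreGraph

section Neighbourhood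

variable {g h : PreGraph V A L} {u v w : V} {a : A}

lemma mem_nh_of_target (ha : a ∈ g.Arr) (hq : (a, (v, u)) ∈ g.inc) :
    a ∈ (g.Nh u).Arr ∧ (a, (v, u)) ∈ (g.Nh u).inc :=
  ⟨⟨ha, ha, v, Or.inl hq⟩, hq, ha, v, Or.inl hq⟩

lemma mem_nh_of_source (ha : a ∈ g.Arr) (hq : (a, (u, w)) ∈ g.inc) :
    a ∈ (g.Nh u).Arr ∧ (a, (u, w)) ∈ (g.Nh u).inc :=
  ⟨⟨ha, ha, w, Or.inr hq⟩, hq, ha, w, Or.inr hq⟩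

lemma inArrowSeq_nh_iff {ars : List A} : InArrowSeq (g.Nh u) u ars ↔ InArrowSeq g u ars := by
  have hmem : ∀ a, (a ∈ (g.Nh u).Arr ∧ ∃ w, (a, (w, u)) ∈ (g.Nh u).inc) ↔
      a ∈ g.Arr ∧ ∃ w, (a, (w, u)) ∈ g.inc := fun a =>
    ⟨fun ⟨ha, w, hq⟩ => ⟨ha.1, w, hq.1⟩,
      fun ⟨ha, w, hq⟩ => ⟨(mem_nh_of_target ha hq).1, w, (mem_nh_of_target ha hq).2⟩⟩
  refine ⟨fun ⟨hnd, hars, hidx⟩ => ⟨hnd, fun a => (hars a).trans (hmem a),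
    fun i a hi => (hidx i a hi).1⟩, fun ⟨hnd, hars, hidx⟩ => ⟨hnd,
    fun a => (hars a).trans (hmem a).symm, fun i a hi => ⟨hidx i a hi, ?_⟩⟩⟩
  obtain ⟨ha, w, hq⟩ := (hars a).mp (List.mem_of_getElem? hi)
  exact ⟨ha, w, Or.inl hq⟩

lemma IsFunctionOn.restrict {α β : Type*} {R : Set (α × β)} {D : Set α}
    (hR : IsFunctionOn R D) (S : Set α) : IsFunctionOn {q | q ∈ R ∧ q.1 ∈ S} (D ∩ S) := by
  refine ⟨fun q hq => ⟨hR.1 q hq.1, hq.2⟩, fun x hx => ?_⟩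
  obtain ⟨y, hy, hyu⟩ := hR.2 x hx.1
  exact ⟨y, ⟨hy, hx.2⟩, fun z hz => hyu z hz.1⟩

lemma IsGraph.mem_arr_of_inc (hg : IsGraph g) {e : V × V} (hq : (a, e) ∈ g.inc) : a ∈ g.Arr :=
  hg.2.1.1 _ hq

lemma IsGraph.ends_mem_adjTo (hg : IsGraph g) (ha : a ∈ g.incidentArrows u)
    (hq : (a, (v, w)) ∈ g.inc) : v ∈ g.adjTo u ∧ w ∈ g.adjTo u := by
  obtain ⟨haArr, x, hx⟩ := ha
  rcases hx with hx | hx <;> obtain ⟨rfl, rfl⟩ := Prod.ext_iff.mp ((hg.2.1.2 a haArr).unique hq hx)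
  · exact ⟨Or.inr ⟨a, haArr, Or.inl hx⟩, Or.inl rfl⟩
  · exact ⟨Or.inl rfl, Or.inr ⟨a, haArr, Or.inr hx⟩⟩

lemma IsGraph.nh (hg : IsGraph g) (u : V) : IsGraph (g.Nh u) := by
  refine ⟨hg.1.mono Set.inter_subset_left Set.inter_subset_left, hg.2.1.restrict _, ?_,
    hg.2.2.2.1.restrict _, hg.2.2.2.2.1.restrict _, hg.2.2.2.2.2.restrict _⟩
  rintro a v w ⟨hq, ha⟩
  obtain ⟨hv, hw⟩ := hg.ends_mem_adjTo ha hq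
  exact (hg.2.2.1 a v w hq).imp (fun h => ⟨⟨h.1, hv⟩, h.2, hw⟩) (fun h => ⟨⟨h.1, hv⟩, h.2, hw⟩)

lemma IsGraph.mem_Tk_of_target (hg : IsGraph g) (hu : u ∈ g.Cf) (hq : (a, (v, u)) ∈ g.inc) :
    v ∈ g.Tk :=
  ((hg.2.2.1 a v u hq).resolve_right fun h => Set.disjoint_left.mp hg.1 h.2 hu).1

lemma IsGraph.mem_Tk_of_source (hg : IsGraph g) (hu : u ∈ g.Cf) (hq : (a, (u, v)) ∈ g.inc) :
    v ∈ g.Tk :=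
  ((hg.2.2.1 a u v hq).resolve_left fun h => Set.disjoint_left.mp hg.1 h.1 hu).2

lemma IsGraph.nh_Cf (hg : IsGraph g) (hu : u ∈ g.Cf) : (g.Nh u).Cf = {u} := by
  refine Set.eq_singleton_iff_unique_mem.mpr ⟨⟨hu, Or.inl rfl⟩, ?_⟩
  rintro v ⟨hv, rfl | ⟨a, -, hq | hq⟩⟩
  · rfl
  · exact absurd (hg.mem_Tk_of_target hu hq) (Set.disjoint_right.mp hg.1 hv)
  · exact absurd (hg.mem_Tk_of_source hu hq) (Set.disjoint_right.mp hg.1 hv)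

lemma IsGraph.nh_Tk (hg : IsGraph g) (hu : u ∈ g.Cf) :
    (g.Nh u).Tk = {v | ∃ a ∈ (g.Nh u).Arr,
      (a, (v, u)) ∈ (g.Nh u).inc ∨ (a, (u, v)) ∈ (g.Nh u).inc} := by
  ext v
  constructor
  · rintro ⟨hvTk, rfl | ⟨a, ha, hq | hq⟩⟩
    · exact absurd hvTk (Set.disjoint_right.mp hg.1 hu)
    · exact ⟨a, (mem_nh_of_target ha hq).1, Or.inl (mem_nh_of_target ha hq).2⟩
    · exact ⟨a, (mem_nh_of_source ha hq).1, Or.inr (mem_nh_of_source ha hq).2⟩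
  · rintro ⟨a, ⟨ha, -⟩, ⟨hq, -⟩ | ⟨hq, -⟩⟩
    · exact ⟨hg.mem_Tk_of_target hu hq, Or.inr ⟨a, ha, Or.inl hq⟩⟩
    · exact ⟨hg.mem_Tk_of_source hu hq, Or.inr ⟨a, ha, Or.inr hq⟩⟩

lemma IsGraph.outArrow_nh (hg : IsGraph g) (hq : (a, (u, w)) ∈ g.inc) :
    a ∈ (g.Nh u).Arr ∧ ∃ w, (a, (u, w)) ∈ (g.Nh u).inc :=
  have h := mem_nh_of_source (hg.mem_arr_of_inc hq) hq
  ⟨h.1, w, h.2⟩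

lemma IsGraph.mem_Cf_of_inc (hh : IsGraph h) (hg : IsGraph g) (hs : h.Subgraph g)
    (hu : u ∈ g.Cf) (hq : (a, (v, u)) ∈ h.inc ∨ (a, (u, v)) ∈ h.inc) : u ∈ h.Cf := by
  have huTk : u ∉ h.Tk := fun hT => Set.disjoint_left.mp hg.1 (hs.tk hT) hu
  rcases hq with hq | hq
  · exact ((hh.2.2.1 a v u hq).resolve_right fun h => huTk h.2).2
  · exact ((hh.2.2.1 a u v hq).resolve_left fun h => huTk h.1).1

end Neighbourhood

lemma IsConfiguration.mono_le {le le' : Set (L × L)} (hle : le ⊆ le') {g : PreGraph V A L}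
    {u : V} {c : L} {ins : List L} {out : L} (hc : IsConfiguration le g u c ins out) :
    IsConfiguration le' g u c ins out := by
  obtain ⟨hg, hCf, hcl, hTk, hout, houtTy, ars, hars, hlen, hinTy⟩ := hc
  refine ⟨hg, hCf, hcl, hTk, hout, fun a ha w hq => ?_, ars, hars, hlen, fun i a τ hi hτ => ?_⟩
  · obtain ⟨h0, σ, htl, hσ⟩ := houtTy a ha w hq
    exact ⟨h0, σ, htl, hle hσ⟩
  · obtain ⟨w, σ, hq, htl, hσ⟩ := hinTy i a τ hi hτ
    exact ⟨w, σ, hq, htl, hle hσ⟩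

lemma InArrowSeq.getElem?_eq_of_mem_ia {g h : PreGraph V A L} {u w : V} {a : A} {k : ℕ}
    {ars : List A} (hars : InArrowSeq h u ars) (hg : IsGraph g) (hh : IsGraph h)
    (hs : h.Subgraph g) (hq : (a, (w, u)) ∈ h.inc) (hk : (a, k + 1) ∈ g.ia) :
    ars[k]? = some a := by
  have ha : a ∈ h.Arr := hh.mem_arr_of_inc hq
  obtain ⟨i, hi⟩ := List.mem_iff_getElem?.mp ((hars.2.1 a).mpr ⟨ha, w, hq⟩)
  obtain rfl : i = k := Nat.succ_injective <|
    (hg.2.2.2.1.2 a (hs.arr ha)).unique (hs.ia (hars.2.2 i a hi)) hk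
  exact hi

section Gluing

variable {g : PreGraph V A L} {Gs : Set (PreGraph V A L)} {u : V}

lemma inArrowSeq_of_pairwise (hg : IsGraph g) (hu : u ∈ g.Cf)
    (hGs : ∀ h ∈ Gs, IsGraph h ∧ h.Subgraph g)
    (hpair : ∀ q ∈ g.inc, ∀ q' ∈ g.inc, ∃ h ∈ Gs, q ∈ h.inc ∧ q' ∈ h.inc) {n : ℕ}
    (hseq : ∀ h ∈ Gs, u ∈ h.Cf → ∃ ars, InArrowSeq h u ars ∧ ars.length = n)
    {h₀ : PreGraph V A L} (hh₀ : h₀ ∈ Gs) {ars : List A} (hars : InArrowSeq h₀ u ars)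
    (hlen : ars.length = n) : InArrowSeq g u ars := by
  have hs₀ := (hGs h₀ hh₀).2
  have huCf : ∀ h ∈ Gs, ∀ {a : A} {v : V}, (a, (v, u)) ∈ h.inc → u ∈ h.Cf := fun h hh _ _ hq =>
    (hGs h hh).1.mem_Cf_of_inc hg (hGs h hh).2 hu (Or.inl hq)
  obtain ⟨hnd, hmem, hidx⟩ := hars
  refine ⟨hnd, fun a => ⟨fun ha => ?_, fun ⟨_, w, hq⟩ => ?_⟩, fun i a hi => hs₀.ia (hidx i a hi)⟩
  · obtain ⟨ha, w, hq⟩ := (hmem a).mp ha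
    exact ⟨hs₀.arr ha, w, hs₀.inc hq⟩
  obtain ⟨h₁, hh₁, hq₁, -⟩ := hpair _ hq _ hq
  obtain ⟨ars₁, hars₁, hlen₁⟩ := hseq h₁ hh₁ (huCf h₁ hh₁ hq₁)
  obtain ⟨j, hj⟩ := List.mem_iff_getElem?.mp
    ((hars₁.2.1 a).mpr ⟨(hGs h₁ hh₁).1.mem_arr_of_inc hq₁, w, hq₁⟩)
  have hja : (a, j + 1) ∈ g.ia := (hGs h₁ hh₁).2.ia (hars₁.2.2 j a hj)
  have hjlt : j < ars.length := hlen ▸ hlen₁ ▸ (List.getElem?_eq_some_iff.mp hj).1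
  obtain ⟨-, w', hq'⟩ := (hmem _).mp (List.getElem_mem hjlt)
  have hjb : (ars[j], j + 1) ∈ g.ia := hs₀.ia (hidx j _ (List.getElem?_eq_getElem hjlt))
  obtain ⟨h₂, hh₂, hq₂, hq₂'⟩ := hpair _ hq _ (hs₀.inc hq')
  obtain ⟨ars₂, hars₂, -⟩ := hseq h₂ hh₂ (huCf h₂ hh₂ hq₂)
  obtain ⟨hg₂, hs₂⟩ := hGs h₂ hh₂
  have hab : a = ars[j] := Option.some.inj <|
    (hars₂.getElem?_eq_of_mem_ia hg hg₂ hs₂ hq₂ hja).symm.trans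
      (hars₂.getElem?_eq_of_mem_ia hg hg₂ hs₂ hq₂' hjb)
  exact hab ▸ List.getElem_mem hjlt

lemma isConfiguration_nh_of_pairwise {le : Set (L × L)} {c : L} {ins : List L} {out : L}
    (hg : IsGraph g) (hGs : ∀ h ∈ Gs, IsGraph h ∧ h.Subgraph g)
    (hpair : ∀ q ∈ g.inc, ∀ q' ∈ g.inc, ∃ h ∈ Gs, q ∈ h.inc ∧ q' ∈ h.inc)
    (hconf : ∀ h ∈ Gs, u ∈ h.Cf → IsConfiguration le (h.Nh u) u c ins out)
    (hu : ∃ h ∈ Gs, u ∈ h.Cf) : IsConfiguration le (g.Nh u) u c ins out := by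
  obtain ⟨h₀, hh₀, hu₀⟩ := hu
  have hs₀ := (hGs h₀ hh₀).2
  have hu : u ∈ g.Cf := hs₀.cf hu₀
  have huCf : ∀ h ∈ Gs, ∀ {a : A} {v : V}, (a, (u, v)) ∈ h.inc → u ∈ h.Cf := fun h hh _ _ hq =>
    (hGs h hh).1.mem_Cf_of_inc hg (hGs h hh).2 hu (Or.inr hq)
  obtain ⟨-, -, hcl₀, -, ⟨o, ⟨-, w₀, hq₀, -⟩, -⟩, -, ars, hars, hlen, hinTy⟩ := hconf h₀ hh₀ hu₀
  have hseq : ∀ h ∈ Gs, u ∈ h.Cf → ∃ ars, InArrowSeq h u ars ∧ ars.length = ins.length :=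
    fun h hh hu => by
      obtain ⟨-, -, -, -, -, -, ars, hars, hlen, -⟩ := hconf h hh hu
      exact ⟨ars, inArrowSeq_nh_iff.mp hars, hlen⟩
  refine ⟨hg.nh u, hg.nh_Cf hu, (hs₀.nh u).cl hcl₀, hg.nh_Tk hu,
    ⟨o, hg.outArrow_nh (hs₀.inc hq₀), ?_⟩,
    ?_, ars, inArrowSeq_nh_iff.mpr (inArrowSeq_of_pairwise hg hu hGs hpair hseq hh₀
      (inArrowSeq_nh_iff.mp hars) hlen), hlen, fun i a τ hi hτ => ?_⟩
  · rintro b ⟨-, w, hq, -⟩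
    obtain ⟨h, hh, hqh, hq₀h⟩ := hpair _ hq _ (hs₀.inc hq₀)
    obtain ⟨-, -, -, -, hout, -⟩ := hconf h hh (huCf h hh hqh)
    exact hout.unique ((hGs h hh).1.outArrow_nh hqh) ((hGs h hh).1.outArrow_nh hq₀h)
  · rintro a - w ⟨hq, -⟩
    obtain ⟨h, hh, hqh, -⟩ := hpair _ hq _ hq
    obtain ⟨-, -, -, -, -, houtTy, -⟩ := hconf h hh (huCf h hh hqh)
    obtain ⟨ha, hq'⟩ := mem_nh_of_source ((hGs h hh).1.mem_arr_of_inc hqh) hqh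
    obtain ⟨hia, σ, htl, hσ⟩ := houtTy a ha w hq'
    exact ⟨((hGs h hh).2.nh u).ia hia, σ, ((hGs h hh).2.nh u).tl htl, hσ⟩
  · obtain ⟨w, σ, hq, htl, hσ⟩ := hinTy i a τ hi hτ
    exact ⟨w, σ, (hs₀.nh u).inc hq, (hs₀.nh u).tl htl, hσ⟩

end Gluing

def CSpace.Subspace (P U : CSpace V A L) : Prop :=
  P.Ty ⊆ U.Ty ∧ P.le ⊆ U.le ∧ P.C ⊆ U.C ∧ P.sig ⊆ U.sig ∧ P.G.Subgraph U.G

lemma exists_configuration_of_pairwise {U : CSpace V A L} {Ps : Set (CSpace V A L)}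
    (hg : IsGraph U.G) (hsig : IsFunctionOn U.sig U.C)
    (hPs : ∀ P ∈ Ps, P.Subspace U ∧ IsStructureGraph P.Ty P.le P.C P.sig P.G)
    (hpair : ∀ q ∈ U.G.inc, ∀ q' ∈ U.G.inc, ∃ P ∈ Ps, q ∈ P.G.inc ∧ q' ∈ P.G.inc)
    {u : V} (hu : ∃ P ∈ Ps, u ∈ P.G.Cf) :
    ∃ c ins out, (u, c) ∈ U.G.cl ∧ c ∈ U.C ∧ (c, (ins, out)) ∈ U.sig ∧
      IsConfiguration U.le (U.G.Nh u) u c ins out := by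
  obtain ⟨P₀, hP₀, hu₀⟩ := hu
  obtain ⟨⟨-, -, hC₀, hsig₀, hs₀⟩, hsg₀⟩ := hPs P₀ hP₀
  obtain ⟨c, ins, out, hcl, hc, hcsig, -⟩ := hsg₀.2.2 u hu₀
  refine ⟨c, ins, out, hs₀.cl hcl, hC₀ hc, hsig₀ hcsig, ?_⟩
  have hsame : ∀ P ∈ Ps, u ∈ P.G.Cf → IsConfiguration U.le (P.G.Nh u) u c ins out := by
    intro P hP hu
    obtain ⟨⟨-, hle, -, hsigP, hs⟩, hsg⟩ := hPs P hP
    obtain ⟨c', ins', out', hcl', -, hcsig', hconf⟩ := hsg.2.2 u hu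
    obtain rfl : c' = c := (hg.2.2.2.2.2.2 u (hs₀.cf hu₀)).unique (hs.cl hcl') (hs₀.cl hcl)
    obtain ⟨rfl, rfl⟩ : (ins', out') = (ins, out) :=
      (hsig.2 c' (hC₀ hc)).unique (hsigP hcsig') (hsig₀ hcsig)
    exact hconf.mono_le hle
  refine isConfiguration_nh_of_pairwise (Gs := CSpace.G '' Ps) hg ?_ ?_ ?_
    ⟨P₀.G, ⟨P₀, hP₀, rfl⟩, hu₀⟩
  · rintro _ ⟨P, hP, rfl⟩
    exact ⟨(hPs P hP).2.1, (hPs P hP).1.2.2.2.2⟩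
  · intro q hq q' hq'
    obtain ⟨P, hP, hqP, hqP'⟩ := hpair q hq q' hq'
    exact ⟨P.G, ⟨P, hP, rfl⟩, hqP, hqP'⟩
  · rintro _ ⟨P, hP, rfl⟩
    exact hsame P hP

section UnionOfThreeSpaces

variable {Cs₁ Cs₂ Cs₃ : CSpace V A L}

lemma CSpace.subspace_union3_12 : (Cs₁ ∪ Cs₂).Subspace (Cs₁ ∪ Cs₂ ∪ Cs₃) := by
  refine ⟨?_, ?_, ?_, ?_, ?_, ?_, ?_, ?_, ?_, ?_, ?_⟩ <;> exact Set.subset_union_left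

lemma CSpace.subspace_union3_13 : (Cs₁ ∪ Cs₃).Subspace (Cs₁ ∪ Cs₂ ∪ Cs₃) := by
  refine ⟨?_, ?_, ?_, ?_, ?_, ?_, ?_, ?_, ?_, ?_, ?_⟩ <;> exact subset_union3_13

lemma CSpace.subspace_union3_23 : (Cs₂ ∪ Cs₃).Subspace (Cs₁ ∪ Cs₂ ∪ Cs₃) := by
  refine ⟨?_, ?_, ?_, ?_, ?_, ?_, ?_, ?_, ?_, ?_, ?_⟩ <;> exact subset_union3_23

theorem isCSpace_union3 (h₁₂ : IsCSpace (Cs₁ ∪ Cs₂)) (h₁₃ : IsCSpace (Cs₁ ∪ Cs₃))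
    (h₂₃ : IsCSpace (Cs₂ ∪ Cs₃)) : IsCSpace (Cs₁ ∪ Cs₂ ∪ Cs₃) := by
  obtain ⟨po₁₂, dis₁₂, fun₁₂, sig₁₂, sg₁₂⟩ := h₁₂
  obtain ⟨po₁₃, dis₁₃, fun₁₃, sig₁₃, sg₁₃⟩ := h₁₃
  obtain ⟨po₂₃, dis₂₃, fun₂₃, -, sg₂₃⟩ := h₂₃
  have hsig := isFunctionOn_union3 fun₁₂ fun₁₃ fun₂₃
  have hg : IsGraph (Cs₁ ∪ Cs₂ ∪ Cs₃).G := isGraph_union3 sg₁₂.1 sg₁₃.1 sg₂₃.1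
  refine ⟨isPartialOrderOn_union3 po₁₂ po₁₃ po₂₃, disjoint_union3 dis₁₂ dis₁₃ dis₂₃, hsig, ?_,
    hg, ?_, fun u hu => exists_configuration_of_pairwise
      (Ps := {Cs₁ ∪ Cs₂, Cs₁ ∪ Cs₃, Cs₂ ∪ Cs₃}) hg hsig ?_ ?_ ?_⟩
  · rintro c ins out (h | h)
    · obtain ⟨hne, hins, hout⟩ := sig₁₂ c ins out h
      exact ⟨hne, fun τ hτ => Or.inl (hins τ hτ), Or.inl hout⟩
    · obtain ⟨hne, hins, hout⟩ := sig₁₃ c ins out (Or.inr h)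
      exact ⟨hne, fun τ hτ => subset_union3_13 (hins τ hτ), subset_union3_13 hout⟩
  · rintro x τ (h | h)
    · exact Or.inl (sg₁₂.2.1 x τ h)
    · exact subset_union3_13 (sg₁₃.2.1 x τ (Or.inr h))
  · rintro P (rfl | rfl | rfl)
    · exact ⟨CSpace.subspace_union3_12, sg₁₂⟩
    · exact ⟨CSpace.subspace_union3_13, sg₁₃⟩
    · exact ⟨CSpace.subspace_union3_23, sg₂₃⟩
  · intro q hq q' hq'
    rcases mem_pairwise_union_of_mem_union3 hq hq' with ⟨h, h'⟩ | ⟨h, h'⟩ | ⟨h, h'⟩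
    · exact ⟨_, Or.inl rfl, h, h'⟩
    · exact ⟨_, Or.inr (Or.inl rfl), h, h'⟩
    · exact ⟨_, Or.inr (Or.inr rfl), h, h'⟩
  · rcases hu with h | h
    · exact ⟨_, Or.inl rfl, h⟩
    · exact ⟨_, Or.inr (Or.inl rfl), Or.inr h⟩

end UnionOfThreeSpaces

/-- the universal space of a representational system is a construction space. -/
theorem universal_space_is_cspace {V A L : Type*}
    (R : RSystem V A L) (Ty MTy : Set L) (le Mle : Set (L × L))
    (hR : IsRSystem R Ty le MTy Mle) :
    IsCSpace ((R.Gs ∪ R.Es) ∪ R.Is) := by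
  obtain ⟨-, -, -, -, -, -, -, -, -, -, -, -, -, -, -, -, hGE, hGI, hEI, -⟩ := hR
  exact isCSpace_union3 hGE hGI hEI

end RST
end
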